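/- arXiv:2203.15736 — 7 statements merged into one kernel-verified Lean document; each statement's English description precedes it below -/
import Mathlib

section
/- For any integers 1 ≤ d ≤ n, the number of π*-maximal matchings with exactly d errors is at most n^{2d}/d!. -/
open Finset

/-- A maximal matching is determined by its error set: membership characterization. -/
lemma mem_char {n : ℕ} (πs : Equiv.Perm (Fin n)) (P : Finset (Fin n × Fin n))
    (h1 : ∀ i j j', (i, j) ∈ P → (i, j') ∈ P → j = j')
    (h2 : ∀ i i' j, (i, j) ∈ P → (i', j) ∈ P → i = i')
    (h3 : ∀ i : Fin n, (∃ j, (i, j) ∈ P) ∨ (∃ i', (i', πs i) ∈ P))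
    (i j : Fin n) :
    (i, j) ∈ P ↔ (i, j) ∈ P.filter (fun p => p.2 ≠ πs p.1) ∨
      (j = πs i ∧ (∀ j', (i, j') ∉ P.filter (fun p => p.2 ≠ πs p.1)) ∧
        (∀ i', (i', πs i) ∉ P.filter (fun p => p.2 ≠ πs p.1))) := by
  simp only [mem_filter]
  constructor
  · intro hij
    by_cases hj : j = πs i
    · right
      refine ⟨hj, ?_, ?_⟩
      · rintro j' ⟨hj', hne⟩
        exact hne (by rw [h1 i j' j hj' hij, hj])
      · rintro i' ⟨hi', hne⟩
        have hii : i' = i := h2 i' i (πs i) hi' (hj ▸ hij)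
        exact hne (by rw [hii])
    · exact Or.inl ⟨hij, hj⟩
  · rintro (⟨h, _⟩ | ⟨hj, hd, hr⟩)
    · exact h
    · subst hj
      rcases h3 i with ⟨j', hj'⟩ | ⟨i', hi'⟩
      · have hjj : j' = πs i := by
          by_contra hne
          exact hd j' ⟨hj', hne⟩
        rwa [← hjj]
      · have hii : i' = i := by
          by_contra hne
          exact hr i' ⟨hi', fun h => hne (πs.injective h).symm⟩
        rwa [hii] at hi'

/-- A matching is encoded as the graph `P ⊆ [n] × [n]` of a partial injective
function (the first two conditions).  `π*`-maximality is the third condition, and the fourth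
says the matching has exactly `d` errors.  The number of such `π*`-maximal matchings with
exactly `d` errors is at most `n^(2d)/d!`. -/
theorem statement0 (n d : ℕ) (hd1 : 1 ≤ d) (hdn : d ≤ n) (πs : Equiv.Perm (Fin n)) :
    (Nat.card {P : Finset (Fin n × Fin n) //
        (∀ i j j', (i, j) ∈ P → (i, j') ∈ P → j = j') ∧
        (∀ i i' j, (i, j) ∈ P → (i', j) ∈ P → i = i') ∧
        (∀ i : Fin n, (∃ j, (i, j) ∈ P) ∨ (∃ i', (i', πs i) ∈ P)) ∧
        (P.filter (fun p => p.2 ≠ πs p.1)).card = d} : ℝ)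
      ≤ (n : ℝ) ^ (2 * d) / (Nat.factorial d : ℝ) := by
  have key : Nat.card {P : Finset (Fin n × Fin n) //
        (∀ i j j', (i, j) ∈ P → (i, j') ∈ P → j = j') ∧
        (∀ i i' j, (i, j) ∈ P → (i', j) ∈ P → i = i') ∧
        (∀ i : Fin n, (∃ j, (i, j) ∈ P) ∨ (∃ i', (i', πs i) ∈ P)) ∧
        (P.filter (fun p => p.2 ≠ πs p.1)).card = d} ≤ (n ^ 2).choose d := by
    have hinj : Function.Injective
        (fun P : {P : Finset (Fin n × Fin n) //
          (∀ i j j', (i, j) ∈ P → (i, j') ∈ P → j = j') ∧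
          (∀ i i' j, (i, j) ∈ P → (i', j) ∈ P → i = i') ∧
          (∀ i : Fin n, (∃ j, (i, j) ∈ P) ∨ (∃ i', (i', πs i) ∈ P)) ∧
          (P.filter (fun p => p.2 ≠ πs p.1)).card = d} =>
          (⟨P.1.filter (fun p => p.2 ≠ πs p.1), by
            rw [mem_powersetCard]
            exact ⟨subset_univ _, P.2.2.2.2⟩⟩ :
            ↥((univ : Finset (Fin n × Fin n)).powersetCard d))) := by
      rintro ⟨P, hP1, hP2, hP3, hP4⟩ ⟨Q, hQ1, hQ2, hQ3, hQ4⟩ h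
      simp only [Subtype.mk.injEq] at h ⊢
      ext ⟨i, j⟩
      rw [mem_char πs P hP1 hP2 hP3, mem_char πs Q hQ1 hQ2 hQ3, h]
    calc Nat.card _ ≤ Nat.card ↥((univ : Finset (Fin n × Fin n)).powersetCard d) :=
          Nat.card_le_card_of_injective _ hinj
      _ = ((univ : Finset (Fin n × Fin n)).powersetCard d).card := Nat.card_eq_finsetCard _
      _ = (n ^ 2).choose d := by
          rw [card_powersetCard, card_univ, Fintype.card_prod, Fintype.card_fin, sq]
  calc (Nat.card _ : ℝ) ≤ ((n ^ 2).choose d : ℝ) := by exact_mod_cast key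
    _ ≤ ((n ^ 2 : ℕ) : ℝ) ^ d / (Nat.factorial d : ℝ) := Nat.choose_le_pow_div d (n ^ 2)
    _ = (n : ℝ) ^ (2 * d) / (Nat.factorial d : ℝ) := by
        rw [pow_mul]; push_cast; ring
end

section
/- For any matching (M, μ) of a pair of graphs (G_1, G_2) on vertex set [n], there exists a π*-maximal matching (M', μ') extending (M, μ) such that f(μ) ≤ f(μ'), where f(μ) is the sum over incorrectly matched vertices i (those with μ(i) ≠ π*(i)) of the degree of i in the intersection graph G_1 ∧_μ G_2. -/
open Finset

/-- Degree of `i` in the intersection graph `G₁ ∧_μ G₂` (vertex set `M`). -/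
def interDeg {n : ℕ} (G1 G2 : SimpleGraph (Fin n)) [DecidableRel G1.Adj]
    [DecidableRel G2.Adj] (M : Finset (Fin n)) (μ : Fin n → Fin n) (i : Fin n) : ℕ :=
  (M.filter (fun j => j ≠ i ∧ G1.Adj i j ∧ G2.Adj (μ i) (μ j))).card

/-- `f(μ)`: sum of intersection-graph degrees over incorrectly matched vertices. -/
def fval {n : ℕ} (G1 G2 : SimpleGraph (Fin n)) [DecidableRel G1.Adj] [DecidableRel G2.Adj]
    (πs : Equiv.Perm (Fin n)) (M : Finset (Fin n)) (μ : Fin n → Fin n) : ℕ :=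
  ∑ i ∈ M.filter (fun i => μ i ≠ πs i), interDeg G1 G2 M μ i

lemma interDeg_mono {n : ℕ} (G1 G2 : SimpleGraph (Fin n)) [DecidableRel G1.Adj]
    [DecidableRel G2.Adj] {M M' : Finset (Fin n)} {μ μ' : Fin n → Fin n}
    (hMM : M ⊆ M') (hμμ : ∀ j ∈ M, μ' j = μ j) {i : Fin n} (hi : i ∈ M) :
    interDeg G1 G2 M μ i ≤ interDeg G1 G2 M' μ' i := by
  apply Finset.card_le_card
  intro j hj
  simp only [mem_filter] at hj ⊢
  obtain ⟨hjM, hji, h1, h2⟩ := hj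
  exact ⟨hMM hjM, hji, h1, by rwa [hμμ i hi, hμμ j hjM]⟩

lemma fval_mono {n : ℕ} (G1 G2 : SimpleGraph (Fin n)) [DecidableRel G1.Adj]
    [DecidableRel G2.Adj] (πs : Equiv.Perm (Fin n)) {M M' : Finset (Fin n)}
    {μ μ' : Fin n → Fin n} (hMM : M ⊆ M') (hμμ : ∀ j ∈ M, μ' j = μ j) :
    fval G1 G2 πs M μ ≤ fval G1 G2 πs M' μ' := by
  unfold fval
  calc ∑ i ∈ M.filter (fun i => μ i ≠ πs i), interDeg G1 G2 M μ i
      ≤ ∑ i ∈ M.filter (fun i => μ i ≠ πs i), interDeg G1 G2 M' μ' i :=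
        Finset.sum_le_sum (fun i hi =>
          interDeg_mono G1 G2 hMM hμμ (Finset.mem_filter.1 hi).1)
    _ ≤ ∑ i ∈ M'.filter (fun i => μ' i ≠ πs i), interDeg G1 G2 M' μ' i := by
        apply Finset.sum_le_sum_of_subset
        intro j hj
        simp only [mem_filter] at hj ⊢
        exact ⟨hMM hj.1, by rw [hμμ j hj.1]; exact hj.2⟩

/-- every matching `(M, μ)` extends to a `π*`-maximal matching `(M', μ')`
with `f(μ) ≤ f(μ')`. -/
theorem statement1 {n : ℕ} (G1 G2 : SimpleGraph (Fin n)) [DecidableRel G1.Adj]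
    [DecidableRel G2.Adj] (πs : Equiv.Perm (Fin n)) (M : Finset (Fin n))
    (μ : Fin n → Fin n) (hμ : Set.InjOn μ ↑M) :
    ∃ (M' : Finset (Fin n)) (μ' : Fin n → Fin n),
      M ⊆ M' ∧ (∀ i ∈ M, μ' i = μ i) ∧ Set.InjOn μ' ↑M' ∧
      (∀ i : Fin n, i ∈ M' ∨ πs i ∈ M'.image μ') ∧
      fval G1 G2 πs M μ ≤ fval G1 G2 πs M' μ' := by
  have key : ∀ k (M : Finset (Fin n)) (μ : Fin n → Fin n), Set.InjOn μ ↑M →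
      (Finset.univ.filter (fun i => i ∉ M ∧ πs i ∉ M.image μ)).card ≤ k →
      ∃ (M' : Finset (Fin n)) (μ' : Fin n → Fin n),
        M ⊆ M' ∧ (∀ i ∈ M, μ' i = μ i) ∧ Set.InjOn μ' ↑M' ∧
        (∀ i : Fin n, i ∈ M' ∨ πs i ∈ M'.image μ') ∧
        fval G1 G2 πs M μ ≤ fval G1 G2 πs M' μ' := by
    intro k
    induction k with
    | zero =>
      intro M μ hinj hcard
      refine ⟨M, μ, subset_rfl, fun _ _ => rfl, hinj, ?_, le_rfl⟩
      intro i
      by_contra hcon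
      push_neg at hcon
      have : i ∈ Finset.univ.filter (fun i => i ∉ M ∧ πs i ∉ M.image μ) := by
        simp only [Finset.mem_filter, Finset.mem_univ, true_and]
        exact hcon
      have := Finset.card_pos.2 ⟨i, this⟩
      omega
    | succ k ih =>
      intro M μ hinj hcard
      by_cases h : ∃ i, i ∉ M ∧ πs i ∉ M.image μ
      · obtain ⟨i, hiM, hiIm⟩ := h
        set M2 := insert i M with hM2
        set μ2 := Function.update μ i (πs i) with hμ2
        have hsub : M ⊆ M2 := Finset.subset_insert _ _
        have hag : ∀ j ∈ M, μ2 j = μ j := by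
          intro j hj
          have : j ≠ i := fun e => hiM (e ▸ hj)
          simp [hμ2, Function.update_of_ne this]
        have hinj2 : Set.InjOn μ2 ↑M2 := by
          intro a ha b hb hab
          simp only [hM2, Finset.coe_insert, Set.mem_insert_iff] at ha hb
          rcases ha with rfl | ha <;> rcases hb with rfl | hb
          · rfl
          · exfalso; apply hiIm
            rw [Finset.mem_image]
            exact ⟨b, hb, by rw [← hag b hb, ← hab]; simp [hμ2]⟩
          · exfalso; apply hiIm
            rw [Finset.mem_image]
            exact ⟨a, ha, by rw [← hag a ha, hab]; simp [hμ2]⟩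
          · exact hinj ha hb (by rwa [hag a ha, hag b hb] at hab)
        have hcard2 : (Finset.univ.filter (fun j => j ∉ M2 ∧ πs j ∉ M2.image μ2)).card ≤ k := by
          have hssub : (Finset.univ.filter (fun j => j ∉ M2 ∧ πs j ∉ M2.image μ2)) ⊂
              (Finset.univ.filter (fun j => j ∉ M ∧ πs j ∉ M.image μ)) := by
            constructor
            · intro j hj
              simp only [Finset.mem_filter, Finset.mem_univ, true_and] at hj ⊢
              refine ⟨fun hjM => hj.1 (hsub hjM), fun him => hj.2 ?_⟩
              rw [Finset.mem_image] at him ⊢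
              obtain ⟨a, ha, hae⟩ := him
              exact ⟨a, hsub ha, by rw [hag a ha]; exact hae⟩
            · intro hc
              have hi1 : i ∈ Finset.univ.filter (fun j => j ∉ M ∧ πs j ∉ M.image μ) := by
                simp only [Finset.mem_filter, Finset.mem_univ, true_and]
                exact ⟨hiM, hiIm⟩
              have := hc hi1
              simp only [Finset.mem_filter] at this
              exact this.2.1 (Finset.mem_insert_self i M)
          have := Finset.card_lt_card hssub
          omega
        obtain ⟨M', μ', h1, h2, h3, h4, h5⟩ := ih M2 μ2 hinj2 hcard2
        refine ⟨M', μ', hsub.trans h1, ?_, h3, h4, ?_⟩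
        · intro j hj
          rw [h2 j (hsub hj), hag j hj]
        · exact le_trans (fval_mono G1 G2 πs hsub hag) h5
      · push_neg at h
        refine ⟨M, μ, subset_rfl, fun _ _ => rfl, hinj, fun i => ?_, le_rfl⟩
        by_cases hi : i ∈ M
        · exact Or.inl hi
        · exact Or.inr (h i hi)
  exact key _ M μ hμ le_rfl
end

section
/- Let (G_1, G_2) be a pair of random graphs on [n] with ground-truth matching π*, let k be a positive integer, and define ξ := max_{1 ≤ d ≤ n} max_{(M,μ) ∈ M(d)} P(f(μ) ≥ kd)^{1/d}. Then the probability that there exists a matching (M, μ) such that the intersection graph G_1 ∧_μ G_2 has minimum degree at least k and μ(i) ≠ π*(i) for some i ∈ M is at most e^{n²ξ} − 1. -/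
open Finset MeasureTheory

/-- `f(μ)` for random graphs given by adjacency indicators `A`, `B` at sample point `ω`:
the sum, over vertices of `M` incorrectly matched by `μ`, of the degree in the
intersection graph `G₁ ∧_μ G₂`. -/
def fvalW {Ω : Type} {n : ℕ} (A B : Ω → Fin n → Fin n → Bool) (πs : Equiv.Perm (Fin n))
    (M : Finset (Fin n)) (μ : Fin n → Fin n) (ω : Ω) : ℕ :=
  ∑ i ∈ M.filter (fun i => μ i ≠ πs i),
    (M.filter (fun j => j ≠ i ∧ A ω i j = true ∧ B ω (μ i) (μ j) = true)).card

/-!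
A matching with minimum intersection degree `≥ k` and some mismatched vertex extends, without
losing degree, to a `π*`-maximal matching `(M, μ)` with `d ≥ 1` mismatched vertices and
`f(μ) ≥ kd`. Such a matching is determined by the `d` pairs
`(i, μ i)` at its mismatched vertices, so there are at most `C(n², d) ≤ n^{2d}/d!` of them.
The union bound then gives `∑_{d=1}^n (n²ξ)^d / d! ≤ e^{n²ξ} - 1`.
-/

section Matching

variable {n : ℕ} (πs : Equiv.Perm (Fin n))

/-- Matchings are total functions here; fixing `μ = π*` off `M` makes a `π*`-maximal matching
determined by its values at the mismatched vertices. -/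
def IsCanonicalMaximal (M : Finset (Fin n)) (μ : Fin n → Fin n) : Prop :=
  Set.InjOn μ M ∧ (∀ i, i ∈ M ∨ πs i ∈ M.image μ) ∧ ∀ i ∉ M, μ i = πs i

def mismatched (M : Finset (Fin n)) (μ : Fin n → Fin n) : Finset (Fin n) :=
  M.filter (fun i => μ i ≠ πs i)

def canonicalExtension (M : Finset (Fin n)) (μ : Fin n → Fin n) :
    Finset (Fin n) × (Fin n → Fin n) :=
  (M ∪ univ.filter (fun i => πs i ∉ M.image μ), fun i => if i ∈ M then μ i else πs i)

variable {πs}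

lemma card_mismatched_le (M : Finset (Fin n)) (μ : Fin n → Fin n) :
    #(mismatched πs M μ) ≤ n :=
  (card_le_univ _).trans_eq (Fintype.card_fin n)

lemma subset_canonicalExtension_fst (M : Finset (Fin n)) (μ : Fin n → Fin n) :
    M ⊆ (canonicalExtension πs M μ).1 :=
  subset_union_left

lemma canonicalExtension_snd_of_mem {M : Finset (Fin n)} (μ : Fin n → Fin n) {i : Fin n}
    (hi : i ∈ M) : (canonicalExtension πs M μ).2 i = μ i :=
  if_pos hi

lemma canonicalExtension_congr {M : Finset (Fin n)} {μ ν : Fin n → Fin n}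
    (h : ∀ i ∈ M, μ i = ν i) : canonicalExtension πs M μ = canonicalExtension πs M ν := by
  unfold canonicalExtension
  rw [image_congr h]
  refine Prod.ext rfl (funext fun i => ?_)
  dsimp only
  split_ifs with hi
  exacts [h i hi, rfl]

lemma isCanonicalMaximal_canonicalExtension {M : Finset (Fin n)} {μ : Fin n → Fin n}
    (hμ : Set.InjOn μ M) :
    IsCanonicalMaximal πs (canonicalExtension πs M μ).1 (canonicalExtension πs M μ).2 := by
  simp only [IsCanonicalMaximal, canonicalExtension]
  refine ⟨?_, fun i => ?_, fun i hi => if_neg fun hiM => hi (mem_union_left _ hiM)⟩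
  · intro i hi j hj hij
    simp only [coe_union, coe_filter, Set.mem_union, mem_coe, mem_univ, true_and,
      Set.mem_ofPred_eq] at hi hj
    by_cases hiM : i ∈ M <;> by_cases hjM : j ∈ M <;>
      simp only [hiM, hjM, if_true, if_false] at hij
    · exact hμ hiM hjM hij
    · exact ((hj.resolve_left hjM) (hij ▸ mem_image_of_mem μ hiM)).elim
    · exact ((hi.resolve_left hiM) (hij ▸ mem_image_of_mem μ hjM)).elim
    · exact πs.injective hij
  · by_cases hi : i ∈ M ∪ univ.filter (fun i => πs i ∉ M.image μ)
    · exact .inl hi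
    · simp only [mem_union, mem_filter, mem_univ, true_and, not_or, not_not] at hi
      obtain ⟨j, hj, hji⟩ := mem_image.mp hi.2
      exact .inr (mem_image.mpr ⟨j, mem_union_left _ hj, by rwa [if_pos hj]⟩)

lemma mismatched_canonicalExtension (M : Finset (Fin n)) (μ : Fin n → Fin n) :
    mismatched πs (canonicalExtension πs M μ).1 (canonicalExtension πs M μ).2 =
      mismatched πs M μ := by
  ext i
  by_cases hiM : i ∈ M <;> simp [mismatched, canonicalExtension, hiM]

lemma IsCanonicalMaximal.canonicalExtension_mismatched {M : Finset (Fin n)}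
    {μ : Fin n → Fin n} (h : IsCanonicalMaximal πs M μ) :
    canonicalExtension πs (mismatched πs M μ) μ = (M, μ) := by
  obtain ⟨hinj, hmax, hout⟩ := h
  have hfix : ∀ i ∉ mismatched πs M μ, μ i = πs i := fun i hi => by
    by_cases hiM : i ∈ M
    · simpa [mismatched, hiM] using hi
    · exact hout i hiM
  refine Prod.ext (Finset.ext fun i => ?_) (funext fun i => ?_)
  · simp only [canonicalExtension, mem_union, mem_filter, mem_univ, true_and, mem_image,
      not_exists, not_and]
    constructor
    · rintro (hi | hi)
      · exact (mem_filter.mp hi).1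
      · obtain hiM | ⟨j, hjM, hji⟩ := (hmax i).imp_right mem_image.mp
        · exact hiM
        · by_cases hj : j ∈ mismatched πs M μ
          · exact (hi j hj hji).elim
          · exact πs.injective ((hfix j hj).symm.trans hji) ▸ hjM
    · intro hiM
      by_cases hi : i ∈ mismatched πs M μ
      · exact .inl hi
      · refine .inr fun j hj hji => ?_
        have hji' : j = i := hinj (mem_filter.mp hj).1 hiM (hji.trans (hfix i hi).symm)
        exact (mem_filter.mp hj).2 (hji' ▸ hji)
  · show (if i ∈ mismatched πs M μ then μ i else πs i) = μ i
    split_ifs with hi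
    exacts [rfl, (hfix i hi).symm]

lemma IsCanonicalMaximal.eq_of_mismatched_graph_eq {M M' : Finset (Fin n)}
    {μ μ' : Fin n → Fin n} (h : IsCanonicalMaximal πs M μ)
    (h' : IsCanonicalMaximal πs M' μ')
    (hgraph : (mismatched πs M μ).image (fun i => (i, μ i)) =
      (mismatched πs M' μ').image (fun i => (i, μ' i))) :
    (M, μ) = (M', μ') := by
  have hT : mismatched πs M μ = mismatched πs M' μ' := by
    simpa [image_image, Function.comp_def] using congrArg (image Prod.fst) hgraph
  have hval : ∀ i ∈ mismatched πs M μ, μ i = μ' i := fun i hi => by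
    have hmem := hgraph ▸ mem_image_of_mem (fun i => (i, μ i)) hi
    obtain ⟨j, -, hj⟩ := mem_image.mp hmem
    obtain ⟨rfl, hji⟩ := Prod.ext_iff.mp hj
    exact hji.symm
  rw [← h.canonicalExtension_mismatched, ← h'.canonicalExtension_mismatched, ← hT]
  exact canonicalExtension_congr hval

open Classical in
lemma card_isCanonicalMaximal_le_choose (d : ℕ) :
    #(univ.filter fun p : Finset (Fin n) × (Fin n → Fin n) =>
      IsCanonicalMaximal πs p.1 p.2 ∧ #(mismatched πs p.1 p.2) = d) ≤ (n ^ 2).choose d := by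
  calc _ ≤ #((univ : Finset (Fin n × Fin n)).powersetCard d) := by
        refine card_le_card_of_injOn (fun p => (mismatched πs p.1 p.2).image fun i => (i, p.2 i))
          (fun p hp => ?_) (fun p hp q hq hpq => ?_)
        · simp only [coe_filter, mem_univ, true_and, Set.mem_ofPred_eq] at hp
          rw [mem_coe, mem_powersetCard, card_image_of_injective _ fun i j h => congrArg Prod.fst h]
          exact ⟨subset_univ _, hp.2⟩
        · simp only [coe_filter, mem_univ, true_and, Set.mem_ofPred_eq] at hp hq
          exact hp.1.eq_of_mismatched_graph_eq hq.1 hpq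
    _ = (n ^ 2).choose d := by simp [sq]

end Matching

section Degree

variable {Ω : Type} {n : ℕ} (A B : Ω → Fin n → Fin n → Bool) (ω : Ω)

def interDegree (M : Finset (Fin n)) (μ : Fin n → Fin n) (i : Fin n) : ℕ :=
  #(M.filter fun j => j ≠ i ∧ A ω i j = true ∧ B ω (μ i) (μ j) = true)

lemma interDegree_mono {M M' : Finset (Fin n)} {μ μ' : Fin n → Fin n} (hM : M ⊆ M')
    (hμ : ∀ j ∈ M, μ' j = μ j) {i : Fin n} (hi : i ∈ M) :
    interDegree A B ω M μ i ≤ interDegree A B ω M' μ' i := by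
  refine card_le_card fun j hj => ?_
  obtain ⟨hjM, hji, hA, hB⟩ := mem_filter.mp hj
  exact mem_filter.mpr ⟨hM hjM, hji, hA, by rwa [hμ i hi, hμ j hjM]⟩

lemma mul_card_mismatched_le_fvalW {k : ℕ} {πs : Equiv.Perm (Fin n)} {M : Finset (Fin n)}
    {μ : Fin n → Fin n} (h : ∀ i ∈ mismatched πs M μ, k ≤ interDegree A B ω M μ i) :
    k * #(mismatched πs M μ) ≤ fvalW A B πs M μ ω := by
  rw [mul_comm, ← smul_eq_mul]
  exact card_nsmul_le_sum _ _ _ h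

lemma exists_isCanonicalMaximal_of_le_interDegree {k : ℕ} {πs : Equiv.Perm (Fin n)}
    {M : Finset (Fin n)} {μ : Fin n → Fin n} (hμ : Set.InjOn μ M)
    (hdeg : ∀ i ∈ M, k ≤ interDegree A B ω M μ i) {i₀ : Fin n} (hi₀ : i₀ ∈ M)
    (hne : μ i₀ ≠ πs i₀) :
    ∃ p : Finset (Fin n) × (Fin n → Fin n), IsCanonicalMaximal πs p.1 p.2 ∧
      1 ≤ #(mismatched πs p.1 p.2) ∧
      k * #(mismatched πs p.1 p.2) ≤ fvalW A B πs p.1 p.2 ω := by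
  refine ⟨canonicalExtension πs M μ, isCanonicalMaximal_canonicalExtension hμ, ?_,
    mul_card_mismatched_le_fvalW A B ω fun i hi => ?_⟩
  · rw [mismatched_canonicalExtension]
    exact card_pos.mpr ⟨i₀, mem_filter.mpr ⟨hi₀, hne⟩⟩
  · rw [mismatched_canonicalExtension] at hi
    have hiM := (mem_filter.mp hi).1
    exact (hdeg i hiM).trans <| interDegree_mono A B ω (subset_canonicalExtension_fst M μ)
      (fun j hj => canonicalExtension_snd_of_mem μ hj) hiM

end Degree

open Nat in
lemma sum_Icc_pow_div_factorial_le_exp_sub_one {x : ℝ} (hx : 0 ≤ x) (n : ℕ) :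
    ∑ d ∈ Icc 1 n, x ^ d / d ! ≤ Real.exp x - 1 := by
  have h := Real.sum_le_exp_of_nonneg hx (n + 1)
  rw [range_eq_Ico, sum_eq_sum_Ico_succ_bot (succ_pos n)] at h
  simp only [pow_zero, factorial_zero, cast_one, div_one, zero_add, succ_eq_add_one,
    Ico_add_one_right_eq_Icc] at h
  linarith

open Classical in
lemma sum_isCanonicalMaximal_pow_card_mismatched_le {n : ℕ} (πs : Equiv.Perm (Fin n)) {ξ : ℝ}
    (hξ : 0 ≤ ξ) :
    ∑ p ∈ univ.filter (fun p : Finset (Fin n) × (Fin n → Fin n) =>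
        IsCanonicalMaximal πs p.1 p.2 ∧ 1 ≤ #(mismatched πs p.1 p.2)),
      ξ ^ #(mismatched πs p.1 p.2) ≤ Real.exp ((n : ℝ) ^ 2 * ξ) - 1 := by
  set S := univ.filter (fun p : Finset (Fin n) × (Fin n → Fin n) =>
    IsCanonicalMaximal πs p.1 p.2 ∧ 1 ≤ #(mismatched πs p.1 p.2))
  rw [← sum_fiberwise_of_maps_to (t := Icc 1 n) (g := fun p => #(mismatched πs p.1 p.2))
    fun p hp => mem_Icc.mpr ⟨(mem_filter.mp hp).2.2, card_mismatched_le _ _⟩]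
  refine (sum_le_sum fun d _ => ?_).trans
    (sum_Icc_pow_div_factorial_le_exp_sub_one (by positivity) n)
  have hcard : #(S.filter fun p => #(mismatched πs p.1 p.2) = d) ≤ (n ^ 2).choose d :=
    (card_le_card fun p => by simp only [S, mem_filter]; tauto).trans
      (card_isCanonicalMaximal_le_choose d)
  calc ∑ p ∈ S with #(mismatched πs p.1 p.2) = d, ξ ^ #(mismatched πs p.1 p.2)
      = #(S.filter fun p => #(mismatched πs p.1 p.2) = d) * ξ ^ d := by
        rw [sum_congr rfl fun p hp => by rw [(mem_filter.mp hp).2], sum_const, nsmul_eq_mul]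
    _ ≤ (n ^ 2).choose d * ξ ^ d :=
        mul_le_mul_of_nonneg_right (by exact_mod_cast hcard) (by positivity)
    _ ≤ ((n : ℝ) ^ 2) ^ d / d.factorial * ξ ^ d := by
        gcongr; exact_mod_cast Nat.choose_le_pow_div d (n ^ 2)
    _ = ((n : ℝ) ^ 2 * ξ) ^ d / d.factorial := by ring

theorem statement2_general {Ω : Type} [MeasurableSpace Ω] (ℙ : Measure Ω) [IsProbabilityMeasure ℙ]
    {n : ℕ} (k : ℕ) (πs : Equiv.Perm (Fin n))
    (A B : Ω → Fin n → Fin n → Bool) (ξ : ℝ) (hξ0 : 0 ≤ ξ)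
    (hξ : ∀ d : ℕ, 1 ≤ d → d ≤ n →
      ∀ (M : Finset (Fin n)) (μ : Fin n → Fin n), Set.InjOn μ ↑M →
        (∀ i : Fin n, i ∈ M ∨ πs i ∈ M.image μ) →
        (M.filter (fun i => μ i ≠ πs i)).card = d →
        (ℙ {ω | k * d ≤ fvalW A B πs M μ ω}).toReal ≤ ξ ^ d) :
    (ℙ {ω | ∃ (M : Finset (Fin n)) (μ : Fin n → Fin n), Set.InjOn μ ↑M ∧
        (∀ i ∈ M, k ≤ (M.filter
          (fun j => j ≠ i ∧ A ω i j = true ∧ B ω (μ i) (μ j) = true)).card) ∧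
        ∃ i ∈ M, μ i ≠ πs i}).toReal
      ≤ Real.exp ((n : ℝ) ^ 2 * ξ) - 1 := by
  classical
  set S := univ.filter (fun p : Finset (Fin n) × (Fin n → Fin n) =>
    IsCanonicalMaximal πs p.1 p.2 ∧ 1 ≤ #(mismatched πs p.1 p.2))
  set E : Finset (Fin n) × (Fin n → Fin n) → Set Ω :=
    fun p => {ω | k * #(mismatched πs p.1 p.2) ≤ fvalW A B πs p.1 p.2 ω}
  calc _ ≤ ℙ.real (⋃ p ∈ S, E p) := by
        refine measureReal_mono (fun ω ⟨M, μ, hμ, hdeg, i₀, hi₀, hne⟩ => ?_)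
          (measure_ne_top ℙ _)
        obtain ⟨p, hp, hd, hf⟩ :=
          exists_isCanonicalMaximal_of_le_interDegree A B ω hμ hdeg hi₀ hne
        exact Set.mem_biUnion (mem_filter.mpr ⟨mem_univ _, hp, hd⟩) hf
    _ ≤ ∑ p ∈ S, ℙ.real (E p) := measureReal_biUnion_finset_le S E
    _ ≤ ∑ p ∈ S, ξ ^ #(mismatched πs p.1 p.2) := sum_le_sum fun p hp => by
        obtain ⟨-, hpc, hd⟩ := mem_filter.mp hp
        exact hξ _ hd (card_mismatched_le _ _) p.1 p.2 hpc.1 hpc.2.1 rfl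
    _ ≤ Real.exp ((n : ℝ) ^ 2 * ξ) - 1 :=
        sum_isCanonicalMaximal_pow_card_mismatched_le πs hξ0

/-- if `ξ` satisfies `P(f(μ) ≥ kd) ≤ ξ^d` for every `π*`-maximal matching with
`d` errors (`1 ≤ d ≤ n`), i.e. `ξ` dominates the quantity
`max_{1≤d≤n} max_{(M,μ)∈M(d)} P(f(μ) ≥ kd)^{1/d}`, then the probability that some matching
`(M, μ)` makes the intersection graph have minimum degree `≥ k` while mismatching some
vertex is at most `e^{n²ξ} − 1`. -/
theorem statement2 {Ω : Type} [MeasurableSpace Ω] (ℙ : Measure Ω) [IsProbabilityMeasure ℙ]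
    {n : ℕ} (k : ℕ) (hk : 1 ≤ k) (πs : Equiv.Perm (Fin n))
    (A B : Ω → Fin n → Fin n → Bool) (ξ : ℝ) (hξ0 : 0 ≤ ξ)
    (hξ : ∀ d : ℕ, 1 ≤ d → d ≤ n →
      ∀ (M : Finset (Fin n)) (μ : Fin n → Fin n), Set.InjOn μ ↑M →
        (∀ i : Fin n, i ∈ M ∨ πs i ∈ M.image μ) →
        (M.filter (fun i => μ i ≠ πs i)).card = d →
        (ℙ {ω | k * d ≤ fvalW A B πs M μ ω}).toReal ≤ ξ ^ d) :
    (ℙ {ω | ∃ (M : Finset (Fin n)) (μ : Fin n → Fin n), Set.InjOn μ ↑M ∧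
        (∀ i ∈ M, k ≤ (M.filter
          (fun j => j ≠ i ∧ A ω i j = true ∧ B ω (μ i) (μ j) = true)).card) ∧
        ∃ i ∈ M, μ i ≠ πs i}).toReal
      ≤ Real.exp ((n : ℝ) ^ 2 * ξ) - 1 :=
  statement2_general ℙ k πs A B ξ hξ0 hξ
end

section
/- Let G be a graph on [n] and U ⊆ [n]. The iterative expansion procedure that repeatedly adds to the current set any single vertex outside it having at least two neighbors inside, until no such vertex exists, terminates with a set Ū ⊇ U such that every vertex of [n] \ Ū has at most one neighbor in Ū. Moreover, if at some stage the expanded set has size 3|U|, then the subgraph induced on it has at least (4/3) times its number of vertices in edges. -/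
open Finset

/-!
Each expansion step adds one vertex together with at least two edges into the current set,
so after `ℓ` steps the set has `|U| + ℓ` vertices and at least `2ℓ` induced edges.
Termination holds because the set grows strictly inside a finite vertex set.
At size `3|U|` we have `ℓ = 2|U|`, hence at least `4|U| = (4/3) · 3|U|` edges.
-/

variable {V : Type*} [LinearOrder V] (G : SimpleGraph V) [DecidableRel G.Adj]

/-- Edges of `G` inside `s`, each counted once through its ordered pair of endpoints. -/
def edgeCount (s : Finset V) : ℕ :=
  ∑ i ∈ s, ∑ j ∈ s, if i < j ∧ G.Adj i j then 1 else 0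

def ExpandsTo (s t : Finset V) : Prop :=
  ∃ v, v ∉ s ∧ 2 ≤ #{u ∈ s | G.Adj v u} ∧ t = insert v s

variable {G}

theorem edgeCount_insert {s : Finset V} {v : V} (hv : v ∉ s) :
    edgeCount G (insert v s) = edgeCount G s + #{u ∈ s | G.Adj v u} := by
  have hpair : ∀ u ∈ s, ((if v < u ∧ G.Adj v u then 1 else 0) +
      if u < v ∧ G.Adj u v then 1 else 0) = if G.Adj v u then 1 else 0 := by
    intro u hu
    rcases lt_or_gt_of_ne (ne_of_mem_of_not_mem hu hv).symm with h | h <;>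
      simp [h, h.not_gt, G.adj_comm]
  simp only [edgeCount, sum_insert hv, sum_add_distrib, lt_irrefl, false_and, if_false,
    zero_add]
  rw [card_filter, ← sum_congr rfl hpair, sum_add_distrib]
  ring

theorem ExpandsTo.subset {s t : Finset V} (h : ExpandsTo G s t) : s ⊆ t := by
  obtain ⟨v, -, -, rfl⟩ := h
  exact subset_insert v s

theorem ExpandsTo.card_eq {s t : Finset V} (h : ExpandsTo G s t) : #t = #s + 1 := by
  obtain ⟨v, hv, -, rfl⟩ := h
  exact card_insert_of_notMem hv

theorem ExpandsTo.edgeCount_add_two_le {s t : Finset V} (h : ExpandsTo G s t) :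
    edgeCount G s + 2 ≤ edgeCount G t := by
  obtain ⟨v, hv, hdeg, rfl⟩ := h
  rw [edgeCount_insert hv]
  omega

section Chain

variable {m : ℕ} {seq : ℕ → Finset V}

theorem subset_of_expandsTo_chain (hstep : ∀ ℓ < m, ExpandsTo G (seq ℓ) (seq (ℓ + 1)))
    {ℓ : ℕ} (hℓ : ℓ ≤ m) : seq 0 ⊆ seq ℓ := by
  induction ℓ with
  | zero => rfl
  | succ ℓ ih => exact (ih (by omega)).trans (hstep ℓ (by omega)).subset

theorem card_of_expandsTo_chain (hstep : ∀ ℓ < m, ExpandsTo G (seq ℓ) (seq (ℓ + 1)))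
    {ℓ : ℕ} (hℓ : ℓ ≤ m) : #(seq ℓ) = #(seq 0) + ℓ := by
  induction ℓ with
  | zero => rfl
  | succ ℓ ih => rw [(hstep ℓ (by omega)).card_eq, ih (by omega), add_assoc]

theorem two_mul_le_edgeCount_of_expandsTo_chain
    (hstep : ∀ ℓ < m, ExpandsTo G (seq ℓ) (seq (ℓ + 1))) {ℓ : ℕ} (hℓ : ℓ ≤ m) :
    2 * ℓ ≤ edgeCount G (seq ℓ) := by
  induction ℓ with
  | zero => exact Nat.zero_le _
  | succ ℓ ih =>
    have := (hstep ℓ (by omega)).edgeCount_add_two_le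
    have := ih (by omega)
    omega

end Chain

theorem exists_expandsTo_chain [Fintype V] (U : Finset V) :
    ∃ (m : ℕ) (seq : ℕ → Finset V), seq 0 = U ∧
      (∀ ℓ < m, ExpandsTo G (seq ℓ) (seq (ℓ + 1))) ∧
      ∀ v, v ∉ seq m → #{u ∈ seq m | G.Adj v u} ≤ 1 := by
  refine Finset.strongDownwardInductionOn (n := Fintype.card V) U ?_ (card_le_univ U)
  intro s ih _
  by_cases hgrow : ∃ v, v ∉ s ∧ 2 ≤ #{u ∈ s | G.Adj v u}
  · obtain ⟨v, hv, hdeg⟩ := hgrow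
    obtain ⟨m, seq, hseq0, hstep, hstuck⟩ := ih (card_le_univ _) (ssubset_insert hv)
    refine ⟨m + 1, fun | 0 => s | ℓ + 1 => seq ℓ, rfl, ?_, hstuck⟩
    rintro (_ | ℓ) hℓ
    · exact ⟨v, hv, hdeg, hseq0⟩
    · exact hstep ℓ (by omega)
  · exact ⟨0, fun _ => s, rfl, by simp,
      fun v hv => Nat.le_of_lt_succ (not_le.mp fun hdeg => hgrow ⟨v, hv, hdeg⟩)⟩

/-- Łuczak expansion: for any graph `G` on `[n]` and any `U ⊆ [n]`, the
iterative procedure — repeatedly add a single vertex outside the current set having at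
least two neighbors inside — terminates: there is a chain `U = seq 0 ⊆ ⋯ ⊆ seq m = Ū`
where each step inserts one such vertex, `Ū ⊇ U`, every vertex outside `Ū` has at most one
neighbor in `Ū`, and moreover at any stage `ℓ ≤ m` where the current set has size `3|U|`,
the induced subgraph on it has at least `(4/3)` times its number of vertices in edges. -/
theorem statement4 (n : ℕ) (G : SimpleGraph (Fin n)) [DecidableRel G.Adj]
    (U : Finset (Fin n)) :
    ∃ (m : ℕ) (seq : ℕ → Finset (Fin n)),
      seq 0 = U ∧
      (∀ ℓ < m, ∃ v, v ∉ seq ℓ ∧ 2 ≤ ((seq ℓ).filter (fun u => G.Adj v u)).card ∧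
        seq (ℓ + 1) = insert v (seq ℓ)) ∧
      U ⊆ seq m ∧
      (∀ v, v ∉ seq m → ((seq m).filter (fun u => G.Adj v u)).card ≤ 1) ∧
      (∀ ℓ ≤ m, (seq ℓ).card = 3 * U.card →
        (4 / 3 : ℝ) * (seq ℓ).card ≤
          ∑ i ∈ seq ℓ, ∑ j ∈ seq ℓ, (if i < j ∧ G.Adj i j then (1 : ℝ) else 0)) := by
  obtain ⟨m, seq, rfl, hstep, hstuck⟩ := exists_expandsTo_chain (G := G) U
  refine ⟨m, seq, rfl, hstep, subset_of_expandsTo_chain hstep le_rfl, hstuck, ?_⟩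
  intro ℓ hℓ hcard
  have hsize := card_of_expandsTo_chain hstep hℓ
  have hedges : 4 * #(seq 0) ≤ edgeCount G (seq ℓ) := by
    have := two_mul_le_edgeCount_of_expandsTo_chain hstep hℓ
    omega
  have hcast : (edgeCount G (seq ℓ) : ℝ) =
      ∑ i ∈ seq ℓ, ∑ j ∈ seq ℓ, (if i < j ∧ G.Adj i j then (1 : ℝ) else 0) := by
    simp [edgeCount, Nat.cast_sum]
  rw [← hcast, hcard]
  have : (4 * #(seq 0) : ℝ) ≤ edgeCount G (seq ℓ) := by exact_mod_cast hedges
  push_cast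
  linarith
end

section
/- Suppose α > β > 0, and let Y ~ Bin(m⁺, α log n / n) and Z ~ Bin(m⁻, β log n / n) be independent with m⁺ = (1+o(1)) n/2 and m⁻ = (1+o(1)) n/2. Then for any ε > 0, P(Y − Z ≤ ε log n) ≤ n^{−(D₊(α,β) − (ε/2) log(α/β)) + o(1)}. -/
open Finset
open scoped Classical

/-- `binomP m p k` is the probability that `Bin(m, p) = k`. -/
noncomputable def binomP (m : ℕ) (p : ℝ) (k : ℕ) : ℝ :=
  (m.choose k : ℝ) * p ^ k * (1 - p) ^ (m - k)

/-- `P(Y − Z ≤ t)` for independent `Y ~ Bin(mp, p)` and `Z ~ Bin(mm, q)`. -/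
noncomputable def probDiffLE (mp mm : ℕ) (p q : ℝ) (t : ℝ) : ℝ :=
  ∑ k ∈ Finset.range (mp + 1), ∑ l ∈ Finset.range (mm + 1),
    (if (k : ℝ) - (l : ℝ) ≤ t then binomP mp p k * binomP mm q l else 0)

/-!
Chernoff's method with the tilt `θ = ½ log (α / β)`: for every `θ ≥ 0`,
`P(Y − Z ≤ t) ≤ E[e^{θ (t − Y + Z)}] ≤ exp (θ t + m⁺ p (e^{−θ} − 1) + m⁻ q (e^{θ} − 1))`.
With `p = α log n / n`, `q = β log n / n` and `t = ε log n` the exponent is `log n` times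
`θ ε + ½ α (e^{−θ} − 1) + ½ β (e^{θ} − 1) + o(1)`, and at this `θ` (which minimises the
`ε = 0` part) one has `α e^{−θ} = β e^{θ} = √(αβ)`, so the bracket equals
`−(D₊(α, β) − (ε / 2) log (α / β))`.
-/

open Filter Topology

lemma binomP_nonneg (m : ℕ) {p : ℝ} (hp₀ : 0 ≤ p) (hp₁ : p ≤ 1) (k : ℕ) : 0 ≤ binomP m p k := by
  have : 0 ≤ 1 - p := by linarith
  unfold binomP
  positivity

lemma sum_binomP_mul_pow (m : ℕ) (p x : ℝ) :
    ∑ k ∈ range (m + 1), binomP m p k * x ^ k = (1 + p * (x - 1)) ^ m := by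
  rw [show 1 + p * (x - 1) = p * x + (1 - p) by ring, add_pow]
  refine sum_congr rfl fun k _ => ?_
  unfold binomP
  ring

lemma one_add_pow_le_exp_mul (m : ℕ) {x : ℝ} (hx : -1 ≤ x) :
    (1 + x) ^ m ≤ Real.exp (m * x) := by
  rw [Real.exp_nat_mul]
  exact pow_le_pow_left₀ (by linarith) (by linarith [Real.add_one_le_exp x]) m

lemma probDiffLE_le_mgf (M N : ℕ) {p q θ : ℝ} (hp₀ : 0 ≤ p) (hp₁ : p ≤ 1) (hq₀ : 0 ≤ q)
    (hq₁ : q ≤ 1) (hθ : 0 ≤ θ) (t : ℝ) :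
    probDiffLE M N p q t ≤ Real.exp (θ * t) * (1 + p * (Real.exp (-θ) - 1)) ^ M *
      (1 + q * (Real.exp θ - 1)) ^ N := by
  have hterm : ∀ k l : ℕ,
      (if (k : ℝ) - l ≤ t then binomP M p k * binomP N q l else 0) ≤
        Real.exp (θ * t) * (binomP M p k * Real.exp (-θ) ^ k) *
          (binomP N q l * Real.exp θ ^ l) := by
    intro k l
    have hbk := binomP_nonneg M hp₀ hp₁ k
    have hbl := binomP_nonneg N hq₀ hq₁ l
    split_ifs with h
    · have htilt : Real.exp (θ * (t - k + l)) =
          Real.exp (θ * t) * Real.exp (-θ) ^ k * Real.exp θ ^ l := by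
        rw [← Real.exp_nat_mul, ← Real.exp_nat_mul, ← Real.exp_add, ← Real.exp_add]
        ring_nf
      calc binomP M p k * binomP N q l
          ≤ binomP M p k * binomP N q l * Real.exp (θ * (t - k + l)) :=
            le_mul_of_one_le_right (mul_nonneg hbk hbl) (Real.one_le_exp (by nlinarith))
        _ = _ := by rw [htilt]; ring
    · exact mul_nonneg (mul_nonneg (Real.exp_pos _).le (mul_nonneg hbk (by positivity)))
        (mul_nonneg hbl (by positivity))
  calc probDiffLE M N p q t
      ≤ ∑ k ∈ range (M + 1), ∑ l ∈ range (N + 1), Real.exp (θ * t) *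
          (binomP M p k * Real.exp (-θ) ^ k) * (binomP N q l * Real.exp θ ^ l) :=
        sum_le_sum fun k _ => sum_le_sum fun l _ => hterm k l
    _ = _ := by
      rw [← sum_binomP_mul_pow, ← sum_binomP_mul_pow, mul_assoc, sum_mul_sum]
      simp only [mul_sum, mul_assoc]

lemma probDiffLE_le_exp (M N : ℕ) {p q θ : ℝ} (hp₀ : 0 ≤ p) (hp₁ : p ≤ 1) (hq₀ : 0 ≤ q)
    (hq₁ : q ≤ 1) (hθ : 0 ≤ θ) (t : ℝ) :
    probDiffLE M N p q t ≤
      Real.exp (θ * t + M * (p * (Real.exp (-θ) - 1)) + N * (q * (Real.exp θ - 1))) := by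
  have hY := one_add_pow_le_exp_mul M (x := p * (Real.exp (-θ) - 1))
    (by nlinarith [Real.exp_pos (-θ)])
  have hZ := one_add_pow_le_exp_mul N (x := q * (Real.exp θ - 1))
    (by nlinarith [Real.exp_pos θ])
  have hZ₀ : 0 ≤ (1 + q * (Real.exp θ - 1)) ^ N := pow_nonneg (by nlinarith [Real.exp_pos θ]) N
  calc probDiffLE M N p q t
      ≤ Real.exp (θ * t) * (1 + p * (Real.exp (-θ) - 1)) ^ M *
          (1 + q * (Real.exp θ - 1)) ^ N := probDiffLE_le_mgf M N hp₀ hp₁ hq₀ hq₁ hθ t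
    _ ≤ Real.exp (θ * t) * Real.exp (M * (p * (Real.exp (-θ) - 1))) *
          Real.exp (N * (q * (Real.exp θ - 1))) := by gcongr
    _ = _ := by rw [Real.exp_add, Real.exp_add]

-- `θ = ½ log (α / β)` gives `e^θ = √(α / β)`, hence `α e^{-θ} = β e^θ = √(αβ)`.
lemma tilted_exponent_eq {α β : ℝ} (hα : 0 < α) (hβ : 0 < β) (ε : ℝ) :
    Real.log (α / β) / 2 * ε + 1 / 2 * (α * (Real.exp (-(Real.log (α / β) / 2)) - 1)) +
        1 / 2 * (β * (Real.exp (Real.log (α / β) / 2) - 1)) =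
      -(((α + β) / 2 - Real.sqrt (α * β)) - ε / 2 * Real.log (α / β)) := by
  rw [Real.exp_neg]
  set s := Real.exp (Real.log (α / β) / 2)
  have hs : 0 < s := Real.exp_pos _
  have hs_sq : s ^ 2 = α / β := by
    rw [← Real.exp_nat_mul]; push_cast
    rw [mul_div_cancel₀ _ two_ne_zero, Real.exp_log (div_pos hα hβ)]
  have hβs : Real.sqrt (α * β) = β * s := by
    rw [Real.sqrt_eq_iff_mul_self_eq_of_pos (by positivity)]
    rw [show β * s * (β * s) = β ^ 2 * s ^ 2 by ring, hs_sq]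
    field_simp
  have hαs : α * s⁻¹ = β * s := by
    field_simp at hs_sq ⊢
    linear_combination -hs_sq
  rw [hβs]
  linear_combination hαs / 2

lemma tendsto_natCast_div_of_tendsto_div_half {m : ℕ → ℕ}
    (hm : Tendsto (fun n : ℕ => (m n : ℝ) / ((n : ℝ) / 2)) atTop (𝓝 1)) :
    Tendsto (fun n : ℕ => (m n : ℝ) / n) atTop (𝓝 (1 / 2)) := by
  convert hm.mul_const (1 / 2) using 2 <;> ring

lemma tendsto_log_natCast_div_natCast :
    Tendsto (fun n : ℕ => Real.log n / n) atTop (𝓝 0) :=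
  Real.isLittleO_log_id_atTop.tendsto_div_nhds_zero.comp tendsto_natCast_atTop_atTop

lemma eventually_mul_log_div_lt_one (c : ℝ) : ∀ᶠ n : ℕ in atTop, c * Real.log n / n < 1 := by
  have h := tendsto_log_natCast_div_natCast.const_mul c
  rw [mul_zero] at h
  simpa only [mul_div_assoc] using h.eventually_lt_const zero_lt_one

theorem statement6_general (α β ε : ℝ) (hβ : 0 < β) (hβα : β < α)
    (mp mm : ℕ → ℕ)
    (hmp : Filter.Tendsto (fun n : ℕ => (mp n : ℝ) / ((n : ℝ) / 2))
      Filter.atTop (nhds 1))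
    (hmm : Filter.Tendsto (fun n : ℕ => (mm n : ℝ) / ((n : ℝ) / 2))
      Filter.atTop (nhds 1)) :
    ∀ δ : ℝ, 0 < δ → ∀ᶠ n : ℕ in Filter.atTop,
      probDiffLE (mp n) (mm n) (α * Real.log n / n) (β * Real.log n / n)
          (ε * Real.log n)
        ≤ (n : ℝ) ^
            (-(((α + β) / 2 - Real.sqrt (α * β)) - ε / 2 * Real.log (α / β)) + δ) := by
  intro δ hδ
  have hα : 0 < α := hβ.trans hβα
  set θ := Real.log (α / β) / 2
  have hθ : 0 ≤ θ := div_nonneg (Real.log_nonneg ((one_le_div hβ).2 hβα.le)) zero_le_two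
  set rate : ℕ → ℝ := fun n => θ * ε + (mp n : ℝ) / n * (α * (Real.exp (-θ) - 1)) +
    (mm n : ℝ) / n * (β * (Real.exp θ - 1)) with rate_def
  have hrate : Tendsto rate atTop
      (𝓝 (-(((α + β) / 2 - Real.sqrt (α * β)) - ε / 2 * Real.log (α / β)))) := by
    rw [← tilted_exponent_eq hα hβ ε]
    exact (tendsto_const_nhds.add ((tendsto_natCast_div_of_tendsto_div_half hmp).mul_const _)).add
      ((tendsto_natCast_div_of_tendsto_div_half hmm).mul_const _)
  filter_upwards [hrate.eventually_lt_const (lt_add_of_pos_right _ hδ),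
    eventually_mul_log_div_lt_one α, eventually_mul_log_div_lt_one β,
    eventually_gt_atTop 0] with n hn_rate hp hq hn
  have hn' : (0 : ℝ) < n := Nat.cast_pos.2 hn
  calc probDiffLE (mp n) (mm n) (α * Real.log n / n) (β * Real.log n / n) (ε * Real.log n)
      ≤ Real.exp (θ * (ε * Real.log n) + mp n * (α * Real.log n / n * (Real.exp (-θ) - 1)) +
          mm n * (β * Real.log n / n * (Real.exp θ - 1))) :=
        probDiffLE_le_exp _ _ (by positivity) hp.le (by positivity) hq.le hθ _
    _ = Real.exp (Real.log n * rate n) := by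
        rw [rate_def]
        field_simp
    _ ≤ _ := by
      rw [Real.rpow_def_of_pos hn']
      gcongr

/-- for `α > β > 0` and independent `Y ~ Bin(m⁺, α log n/n)`,
`Z ~ Bin(m⁻, β log n/n)` with `m⁺, m⁻ = (1+o(1)) n/2`, for any `ε > 0`,
`P(Y − Z ≤ ε log n) ≤ n^{−(D₊(α,β) − (ε/2) log(α/β)) + o(1)}`:
for every `δ > 0`, eventually the probability is at most
`n^{−(D₊ − (ε/2) log(α/β)) + δ}`. -/
theorem statement6 (α β ε : ℝ) (hβ : 0 < β) (hβα : β < α) (hε : 0 < ε)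
    (mp mm : ℕ → ℕ)
    (hmp : Filter.Tendsto (fun n : ℕ => (mp n : ℝ) / ((n : ℝ) / 2))
      Filter.atTop (nhds 1))
    (hmm : Filter.Tendsto (fun n : ℕ => (mm n : ℝ) / ((n : ℝ) / 2))
      Filter.atTop (nhds 1)) :
    ∀ δ : ℝ, 0 < δ → ∀ᶠ n : ℕ in Filter.atTop,
      probDiffLE (mp n) (mm n) (α * Real.log n / n) (β * Real.log n / n)
          (ε * Real.log n)
        ≤ (n : ℝ) ^
            (-(((α + β) / 2 - Real.sqrt (α * β)) - ε / 2 * Real.log (α / β)) + δ) :=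
  statement6_general α β ε hβ hβα mp mm hmp hmm
end

section
/- Fix n and parameters p, q, s ∈ [0,1], let (G_1, G_2) ~ CSBM(n, p, q, s), let d, k ∈ [n], and let (M, μ) ∈ M(d) be a π*-maximal matching with d errors. Then for any θ > 0, P(f(μ) ≥ kd) ≤ 3·exp[d(−θk + (1/2)s²γ(e^{2θ}−1) + n(sγ)²(e^{6θ}−1))], where γ = max{p,q}. -/
/-!
Condition on the community labels: the edge pairs `(A_{ij}, B'_{ij})`, `i < j`, are then
independent. Extend `ρ = π*⁻¹ ∘ μ` from `M` to a permutation `τ`. Every ordered pair `(i, j)`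
counted by `f(μ)` gives an unordered pair `t = {i, j}` incident to an error with `t` an edge of
`G₁` and `τ t` an edge of `G₂`, and each `t` arises at most twice, so `f(μ) ≤ 2 ∑ₜ χₜ` with
`χₜ = A_t B'_{τ t}`. A pair with `τ t = t` is a transposition of two errors (there are at most
`d / 2` of them) and `E χₜ ≤ s²γ`; each of the at most `dn` other pairs has `E χₜ ≤ (sγ)²`, and
these interact only along the orbits of `τ`, a graph of maximum degree two. Three-coloring that
graph and applying Jensen's inequality to `exp` bounds `E exp(2θ ∑ χₜ)` by an average of three
products of independent factors, at the price of `θ ↦ 3θ`; Markov's inequality finishes.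
-/

open MeasureTheory Finset

/-- Joint probability of the pair of correlated edge indicators `(A_{ij}, B'_{ij})` in a
correlated SBM: `r = p` for a same-community pair (`same = true`), `r = q` otherwise;
`(1,1) ↦ s²r`, `(1,0), (0,1) ↦ s(1−s)r`, `(0,0) ↦ 1 − (2s − s²)r`. -/
def pairP (p q s : ℝ) (same : Bool) (x y : Bool) : ℝ :=
  if x && y then s ^ 2 * (if same then p else q)
  else if x || y then s * (1 - s) * (if same then p else q)
  else 1 - (2 * s - s ^ 2) * (if same then p else q)

/-- `csbmLaw ℙ n p q s σ A B'`: under `ℙ`, `(σ, A, B')` is distributed as the correlated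
SBM `CSBM(n, p, q, s)` (in the coordinates of `G₁`, i.e. `B'` is the adjacency of `G₂`
before relabeling by `π*`): labels i.i.d. uniform, and given labels, the pairs
`(A_{ij}, B'_{ij})` independent across vertex pairs with law `pairP`. -/
def csbmLaw {Ω : Type} [MeasurableSpace Ω] (ℙ : Measure Ω) (n : ℕ) (p q s : ℝ)
    (σ : Ω → Fin n → Bool) (A B' : Ω → Fin n → Fin n → Bool) : Prop :=
  ℙ {ω | (∀ i j, A ω i j = A ω j i ∧ B' ω i j = B' ω j i) ∧
         ∀ i, A ω i i = false ∧ B' ω i i = false} = 1 ∧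
  ∀ (ℓ : Fin n → Bool) (e1 e2 : Fin n → Fin n → Bool),
    (∀ i j, e1 i j = e1 j i ∧ e2 i j = e2 j i) →
    (∀ i, e1 i i = false ∧ e2 i i = false) →
    (ℙ {ω | σ ω = ℓ ∧ A ω = e1 ∧ B' ω = e2}).toReal =
      (1 / 2 : ℝ) ^ n * ∏ i : Fin n, ∏ j : Fin n,
        (if i < j then pairP p q s (ℓ i == ℓ j) (e1 i j) (e2 i j) else 1)


section PiExpect

variable {ι α : Type*} [Fintype ι] [DecidableEq ι] [Fintype α]

noncomputable def piExpect (w : ι → α → ℝ) (g : (ι → α) → ℝ) : ℝ :=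
  ∑ x, (∏ i, w i (x i)) * g x

variable {w : ι → α → ℝ}

lemma sum_prod_eq_one (hw : ∀ i, ∑ a, w i a = 1) : ∑ x : ι → α, ∏ i, w i (x i) = 1 := by
  rw [← Fintype.prod_sum]
  simp [hw]

lemma piExpect_const (hw : ∀ i, ∑ a, w i a = 1) (c : ℝ) : piExpect w (fun _ => c) = c := by
  rw [piExpect, ← sum_mul, sum_prod_eq_one hw, one_mul]

lemma piExpect_nonneg (hw0 : ∀ i a, 0 ≤ w i a) {g : (ι → α) → ℝ} (hg : ∀ x, 0 ≤ g x) :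
    0 ≤ piExpect w g :=
  sum_nonneg fun x _ => mul_nonneg (prod_nonneg fun i _ => hw0 i (x i)) (hg x)

lemma piExpect_mono (hw0 : ∀ i a, 0 ≤ w i a) {g g' : (ι → α) → ℝ} (h : ∀ x, g x ≤ g' x) :
    piExpect w g ≤ piExpect w g' :=
  sum_le_sum fun x _ => mul_le_mul_of_nonneg_left (h x) (prod_nonneg fun i _ => hw0 i (x i))

lemma piExpect_add (g h : (ι → α) → ℝ) :
    piExpect w (fun x => g x + h x) = piExpect w g + piExpect w h := by
  simp only [piExpect, mul_add, sum_add_distrib]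

lemma piExpect_const_mul (c : ℝ) (g : (ι → α) → ℝ) :
    piExpect w (fun x => c * g x) = c * piExpect w g := by
  simp only [piExpect, mul_sum]
  exact sum_congr rfl fun x _ => by ring

lemma piExpect_sum {κ : Type*} (s : Finset κ) (g : κ → (ι → α) → ℝ) :
    piExpect w (fun x => ∑ m ∈ s, g m x) = ∑ m ∈ s, piExpect w (g m) := by
  simp only [piExpect, mul_sum]
  exact sum_comm

lemma piExpect_apply (hw : ∀ i, ∑ a, w i a = 1) (i : ι) (f : α → ℝ) :
    piExpect w (fun x => f (x i)) = ∑ a, w i a * f a := by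
  calc piExpect w (fun x => f (x i))
      = ∑ x : ι → α, ∏ j, (w j (x j) * if j = i then f (x j) else 1) := by
        refine sum_congr rfl fun x _ => ?_
        rw [prod_mul_distrib, prod_ite_eq' univ i]
        simp
    _ = ∏ j, ∑ a, (w j a * if j = i then f a else 1) :=
        (Fintype.prod_sum fun j a => w j a * if j = i then f a else 1).symm
    _ = ∑ a, w i a * f a := by
        rw [prod_eq_single i (fun j _ hj => by simp [hj, hw j]) (by simp)]
        simp

/-- Exchanging the `S`-coordinates of two samples `x`, `y` preserves their joint weight. -/
lemma piExpect_mul_of_dependsOn (hw : ∀ i, ∑ a, w i a = 1) (S : Finset ι)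
    {g h : (ι → α) → ℝ} (hg : DependsOn g ↑S) (hh : DependsOn h (↑S)ᶜ) :
    piExpect w (fun x => g x * h x) = piExpect w g * piExpect w h := by
  let mix : (ι → α) × (ι → α) → (ι → α) × (ι → α) :=
    fun xy => (S.piecewise xy.1 xy.2, S.piecewise xy.2 xy.1)
  have hmix : Function.Involutive mix := fun xy => by
    ext i <;> by_cases hi : i ∈ S <;> simp [mix, hi]
  have hweight : ∀ x y : ι → α, (∏ i, w i (x i)) * ∏ i, w i (y i)
      = (∏ i, w i ((mix (x, y)).1 i)) * ∏ i, w i ((mix (x, y)).2 i) := fun x y => by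
    simp only [← prod_mul_distrib]
    refine prod_congr rfl fun i _ => ?_
    by_cases hi : i ∈ S <;> simp [mix, hi, mul_comm]
  let Φ : (ι → α) × (ι → α) → ℝ := fun uv =>
    (∏ i, w i (uv.1 i)) * (∏ i, w i (uv.2 i)) * (g uv.1 * h uv.1)
  calc piExpect w (fun x => g x * h x)
      = ∑ uv, Φ uv := by
        rw [Fintype.sum_prod_type, piExpect]
        refine sum_congr rfl fun u _ => ?_
        simp only [Φ, mul_right_comm _ (∏ i, w i _), ← mul_sum, sum_prod_eq_one hw, mul_one]
    _ = ∑ xy, Φ (mix xy) := (Equiv.sum_comp (hmix.toPerm mix) Φ).symm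
    _ = piExpect w g * piExpect w h := by
        rw [piExpect, piExpect, sum_mul_sum, Fintype.sum_prod_type]
        refine sum_congr rfl fun x _ => sum_congr rfl fun y _ => ?_
        have hgx : g (mix (x, y)).1 = g x := hg fun i hi => by simp [mix, mem_coe.mp hi]
        have hhy : h (mix (x, y)).1 = h y := hh fun i hi => by simp [mix, show i ∉ S from hi]
        simp only [Φ, hgx, hhy, ← hweight]
        ring

lemma piExpect_prod_of_dependsOn (hw : ∀ i, ∑ a, w i a = 1) {κ : Type*}
    (F : Finset κ) (B : κ → Finset ι) (h : κ → (ι → α) → ℝ)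
    (hdep : ∀ t ∈ F, DependsOn (h t) ↑(B t)) (hdisj : (F : Set κ).PairwiseDisjoint B) :
    piExpect w (fun x => ∏ t ∈ F, h t x) = ∏ t ∈ F, piExpect w (h t) := by
  induction F using Finset.cons_induction with
  | empty => simpa using piExpect_const hw 1
  | cons a F ha ih =>
    have hrest : DependsOn (fun x => ∏ t ∈ F, h t x) (↑(B a))ᶜ := fun x y hxy =>
      prod_congr rfl fun t ht => hdep t (mem_cons_of_mem ht) fun i hi =>
        hxy i fun hia => disjoint_left.mp
          (hdisj (mem_cons_self a F) (mem_cons_of_mem ht) fun hat => ha (hat ▸ ht)) hia hi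
    simp only [prod_cons]
    rw [piExpect_mul_of_dependsOn hw (B a) (hdep a (mem_cons_self a F)) hrest,
      ih (fun t ht => hdep t (mem_cons_of_mem ht))
        (hdisj.subset (by simp [Set.subset_insert]))]

lemma piExpect_apply_mul_apply (hw : ∀ i, ∑ a, w i a = 1) {i j : ι} (hij : i ≠ j)
    (f g : α → ℝ) :
    piExpect w (fun x => f (x i) * g (x j)) = (∑ a, w i a * f a) * ∑ a, w j a * g a := by
  rw [piExpect_mul_of_dependsOn hw {i} (fun x y hxy => by simp [hxy i])
    (fun x y hxy => by simp [hxy j (by simpa using hij.symm)]),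
    piExpect_apply hw, piExpect_apply hw]

end PiExpect

/-- By injectivity every `t` has at most two neighbours `g t` and `g⁻¹ t`, so greedy coloring
with three colors succeeds. -/
lemma exists_fin_three_coloring {β : Type*} [DecidableEq β] (g : β → β) (S : Finset β)
    (hg : Set.InjOn g S) : ∃ c : β → Fin 3, ∀ t ∈ S, g t ∈ S → g t ≠ t → c (g t) ≠ c t := by
  induction S using Finset.cons_induction with
  | empty => exact ⟨fun _ => 0, by simp⟩
  | cons a S ha ih =>
    rw [coe_cons] at hg
    obtain ⟨c, hc⟩ := ih (hg.mono (Set.subset_insert _ _))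
    have hpre : #{t ∈ S | g t = a} ≤ 1 := card_le_one.mpr fun x hx y hy => by
      simp only [mem_filter] at hx hy
      exact hg (Set.mem_insert_of_mem _ hx.1) (Set.mem_insert_of_mem _ hy.1)
        (hx.2.trans hy.2.symm)
    have hforb : #(insert (c (g a)) ({t ∈ S | g t = a}.image c)) < #(univ : Finset (Fin 3)) :=
      (card_insert_le _ _).trans_lt <| by
        have := card_image_le (s := {t ∈ S | g t = a}) (f := c)
        simp only [card_univ, Fintype.card_fin]
        omega
    obtain ⟨m, -, hm⟩ := exists_mem_notMem_of_card_lt_card hforb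
    simp only [mem_insert, mem_image, mem_filter, not_or, not_exists, not_and] at hm
    have hSa : ∀ t ∈ S, t ≠ a := fun t ht hta => ha (hta ▸ ht)
    refine ⟨Function.update c a m, fun t ht hgt hne => ?_⟩
    rw [mem_cons] at ht hgt
    rcases ht with rfl | ht <;> rcases hgt with hgt | hgt
    · exact absurd hgt hne
    · simpa [hSa _ hgt] using Ne.symm hm.1
    · simpa [hgt, hSa t ht] using Ne.symm (hm.2 t ⟨ht, hgt⟩)
    · simpa [hSa t ht, hSa _ hgt] using hc t ht hgt hne

lemma exp_add_sum_le_average {k : ℕ} (hk : 0 < k) (a : ℝ) (b : Fin k → ℝ) :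
    Real.exp (a + ∑ m, b m) ≤ (∑ m, Real.exp (a + k * b m)) / k := by
  have hk' : (0 : ℝ) < k := by exact_mod_cast hk
  have hjensen := convexOn_exp.map_sum_le (t := univ) (w := fun _ => (k : ℝ)⁻¹)
    (p := fun m => a + k * b m) (fun _ _ => by positivity) (by simp [hk'.ne'])
    (fun _ _ => Set.mem_univ _)
  simp only [smul_eq_mul, ← mul_sum, sum_add_distrib, sum_const, card_univ, Fintype.card_fin,
    nsmul_eq_mul] at hjensen
  calc Real.exp (a + ∑ m, b m) = Real.exp ((k : ℝ)⁻¹ * (k * a + k * ∑ m, b m)) := by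
        rw [← mul_add, inv_mul_cancel_left₀ hk'.ne']
    _ ≤ _ := hjensen
    _ = _ := by rw [div_eq_inv_mul]

section SharedEdges

variable {ι : Type*} (Q : ι → ι)

def sharedEdge (t : ι) (x : ι → Bool × Bool) : ℝ := if (x t).1 && (x (Q t)).2 then 1 else 0

lemma exp_mul_sharedEdge (c : ℝ) (t : ι) (x : ι → Bool × Bool) :
    Real.exp (c * sharedEdge Q t x) = 1 + (Real.exp c - 1) * sharedEdge Q t x := by
  unfold sharedEdge
  split_ifs <;> simp

variable [Fintype ι] [DecidableEq ι] {w : ι → Bool × Bool → ℝ} {Q}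

lemma piExpect_sharedEdge_of_eq (hw : ∀ i, ∑ a, w i a = 1) {t : ι} (hQt : Q t = t) :
    piExpect w (sharedEdge Q t) = w t (true, true) := by
  let f : Bool × Bool → ℝ := fun a => if a.1 && a.2 then 1 else 0
  have : sharedEdge Q t = fun x => f (x t) := by
    ext x
    simp [sharedEdge, f, hQt]
  rw [this, piExpect_apply hw t f]
  simp [f, Fintype.sum_prod_type]

lemma piExpect_sharedEdge_of_ne (hw : ∀ i, ∑ a, w i a = 1) {t : ι} (hQt : Q t ≠ t) :
    piExpect w (sharedEdge Q t) = (w t (true, true) + w t (true, false))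
      * (w (Q t) (true, true) + w (Q t) (false, true)) := by
  let f : Bool × Bool → ℝ := fun a => if a.1 then 1 else 0
  let g : Bool × Bool → ℝ := fun a => if a.2 then 1 else 0
  have : sharedEdge Q t = fun x => f (x t) * g (x (Q t)) := by
    ext x
    by_cases h₁ : (x t).1 <;> by_cases h₂ : (x (Q t)).2 <;> simp [sharedEdge, f, g, h₁, h₂]
  rw [this, piExpect_apply_mul_apply hw hQt.symm f g]
  simp [f, g, Fintype.sum_prod_type]

variable {γ₁ γ₂ : ℝ}

lemma piExpect_exp_mul_sharedEdge_le (hw0 : ∀ i a, 0 ≤ w i a) (hw : ∀ i, ∑ a, w i a = 1)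
    (h11 : ∀ i, w i (true, true) ≤ γ₁)
    (hfst : ∀ i, w i (true, true) + w i (true, false) ≤ γ₂)
    (hsnd : ∀ i, w i (true, true) + w i (false, true) ≤ γ₂) {c : ℝ} (hc : 0 ≤ c) (t : ι) :
    piExpect w (fun x => Real.exp (c * sharedEdge Q t x))
      ≤ Real.exp ((Real.exp c - 1) * if Q t = t then γ₁ else γ₂ ^ 2) := by
  have hmean : piExpect w (sharedEdge Q t) ≤ if Q t = t then γ₁ else γ₂ ^ 2 := by
    split_ifs with hQt
    · exact (piExpect_sharedEdge_of_eq hw hQt).le.trans (h11 t)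
    · rw [piExpect_sharedEdge_of_ne hw hQt, sq]
      exact mul_le_mul (hfst t) (hsnd (Q t)) (add_nonneg (hw0 _ _) (hw0 _ _))
        ((add_nonneg (hw0 _ _) (hw0 _ _)).trans (hfst t))
  simp_rw [exp_mul_sharedEdge]
  rw [piExpect_add, piExpect_const hw, piExpect_const_mul]
  have hc1 : 0 ≤ Real.exp c - 1 := by linarith [Real.one_le_exp hc]
  nlinarith [Real.add_one_le_exp ((Real.exp c - 1) * if Q t = t then γ₁ else γ₂ ^ 2)]

lemma piExpect_exp_sum_sharedEdge (hw : ∀ i, ∑ a, w i a = 1) (U : Finset ι) (c : ι → ℝ)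
    (hQU : Set.InjOn Q U) (hU : ∀ t ∈ U, ∀ t' ∈ U, Q t = t' → t = t') :
    piExpect w (fun x => Real.exp (∑ t ∈ U, c t * sharedEdge Q t x))
      = ∏ t ∈ U, piExpect w (fun x => Real.exp (c t * sharedEdge Q t x)) := by
  simp_rw [Real.exp_sum]
  refine piExpect_prod_of_dependsOn hw U (fun t => {t, Q t}) _ (fun t _ x y hxy => ?_) ?_
  · simp [sharedEdge, hxy t (by simp), hxy (Q t) (by simp)]
  · intro t ht t' ht' hne
    simp only [Function.onFun, disjoint_insert_left, disjoint_insert_right, mem_insert,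
      mem_singleton, disjoint_singleton]
    have := hU t ht t' ht'
    have := hU t' ht' t ht
    have := hQU ht ht'
    tauto

end SharedEdges

section MomentBound

variable {ι : Type*} [Fintype ι] [DecidableEq ι] {w : ι → Bool × Bool → ℝ} {Q : ι → ι}
  {γ₁ γ₂ : ℝ} {T : Finset ι} {c : ℝ}

/-- Within one color class no pair is the `Q`-image of another, so the factors are independent. -/
lemma piExpect_exp_sum_sharedEdge_colorClass_le (hw0 : ∀ i a, 0 ≤ w i a)
    (hw : ∀ i, ∑ a, w i a = 1) (h11 : ∀ i, w i (true, true) ≤ γ₁)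
    (hfst : ∀ i, w i (true, true) + w i (true, false) ≤ γ₂)
    (hsnd : ∀ i, w i (true, true) + w i (false, true) ≤ γ₂) (hQ : Set.InjOn Q T) (hc : 0 ≤ c)
    {col : ι → Fin 3} (hcol : ∀ t ∈ T, Q t ∈ T → Q t ≠ t → col (Q t) ≠ col t) (m : Fin 3) :
    piExpect w (fun x => Real.exp (c * ∑ t ∈ T with Q t = t, sharedEdge Q t x
        + 3 * c * ∑ t ∈ T with Q t ≠ t ∧ col t = m, sharedEdge Q t x))
      ≤ Real.exp (#{t ∈ T | Q t = t} * ((Real.exp c - 1) * γ₁)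
          + #T * ((Real.exp (3 * c) - 1) * γ₂ ^ 2)) := by
  set F := T.filter (fun t => Q t = t)
  set N := T.filter (fun t => Q t ≠ t ∧ col t = m)
  have hFN : Disjoint F N := disjoint_filter.mpr fun t _ h₁ h₂ => h₂.1 h₁
  have hUT : F ∪ N ⊆ T := union_subset (filter_subset _ _) (filter_subset _ _)
  let c' : ι → ℝ := fun t => if Q t = t then c else 3 * c
  have hexp : ∀ x, c * ∑ t ∈ F, sharedEdge Q t x + 3 * c * ∑ t ∈ N, sharedEdge Q t x
      = ∑ t ∈ F ∪ N, c' t * sharedEdge Q t x := fun x => by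
    rw [sum_union hFN, mul_sum, mul_sum]
    congr 1 <;> refine sum_congr rfl fun t ht => ?_
    · simp [c', (mem_filter.mp ht).2]
    · simp [c', (mem_filter.mp ht).2.1]
  have hindep : ∀ t ∈ F ∪ N, ∀ t' ∈ F ∪ N, Q t = t' → t = t' := by
    intro t ht t' ht' hQt
    simp only [F, N, mem_union, mem_filter] at ht ht'
    by_contra hne
    rcases ht with ⟨-, hfix⟩ | ⟨htT, hmov, hcolt⟩
    · exact hne (hfix.symm.trans hQt)
    rcases ht' with ⟨ht'T, hfix'⟩ | ⟨ht'T, -, hcolt'⟩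
    · exact hne (hQ htT ht'T (hQt.trans hfix'.symm))
    · exact hcol t htT (hQt ▸ ht'T) hmov (by rw [hQt, hcolt, hcolt'])
  simp_rw [hexp]
  rw [piExpect_exp_sum_sharedEdge hw _ _ (hQ.mono hUT) hindep]
  refine (prod_le_prod (fun t _ => piExpect_nonneg hw0 fun _ => (Real.exp_pos _).le)
    fun t _ => piExpect_exp_mul_sharedEdge_le hw0 hw h11 hfst hsnd
      (by positivity : 0 ≤ c' t) t).trans ?_
  rw [← Real.exp_sum, sum_union hFN,
    sum_congr (s₁ := F) rfl (g := fun _ => (Real.exp c - 1) * γ₁) fun t ht => by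
      simp [c', (mem_filter.mp ht).2],
    sum_congr (s₁ := N) rfl (g := fun _ => (Real.exp (3 * c) - 1) * γ₂ ^ 2) fun t ht => by
      simp [c', (mem_filter.mp ht).2.1]]
  simp only [sum_const, nsmul_eq_mul]
  have hB : 0 ≤ (Real.exp (3 * c) - 1) * γ₂ ^ 2 := mul_nonneg
    (by linarith [Real.one_le_exp (by positivity : 0 ≤ 3 * c)]) (sq_nonneg _)
  have hNT : (#N : ℝ) ≤ #T := by exact_mod_cast card_le_card (filter_subset _ _)
  exact Real.exp_le_exp.mpr (add_le_add_right (mul_le_mul_of_nonneg_right hNT hB) _)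

theorem piExpect_exp_sum_sharedEdge_le (hw0 : ∀ i a, 0 ≤ w i a) (hw : ∀ i, ∑ a, w i a = 1)
    (h11 : ∀ i, w i (true, true) ≤ γ₁)
    (hfst : ∀ i, w i (true, true) + w i (true, false) ≤ γ₂)
    (hsnd : ∀ i, w i (true, true) + w i (false, true) ≤ γ₂) (hQ : Set.InjOn Q T) (hc : 0 ≤ c) :
    piExpect w (fun x => Real.exp (c * ∑ t ∈ T, sharedEdge Q t x))
      ≤ Real.exp (#{t ∈ T | Q t = t} * ((Real.exp c - 1) * γ₁)
          + #T * ((Real.exp (3 * c) - 1) * γ₂ ^ 2)) := by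
  obtain ⟨col, hcol⟩ := exists_fin_three_coloring Q T hQ
  have hpoint : ∀ x, Real.exp (c * ∑ t ∈ T, sharedEdge Q t x)
      ≤ (∑ m, Real.exp (c * ∑ t ∈ T with Q t = t, sharedEdge Q t x
          + 3 * c * ∑ t ∈ T with Q t ≠ t ∧ col t = m, sharedEdge Q t x)) / 3 := fun x => by
    have hsplit : c * ∑ t ∈ T, sharedEdge Q t x = c * ∑ t ∈ T with Q t = t, sharedEdge Q t x
        + ∑ m, c * ∑ t ∈ T with Q t ≠ t ∧ col t = m, sharedEdge Q t x := by
      simp_rw [← filter_filter, ← mul_sum, sum_fiberwise, ← mul_add,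
        sum_filter_add_sum_filter_not]
    simpa [hsplit, mul_assoc] using exp_add_sum_le_average (k := 3) (by norm_num) _ _
  calc piExpect w (fun x => Real.exp (c * ∑ t ∈ T, sharedEdge Q t x))
      ≤ (∑ m, piExpect w (fun x => Real.exp (c * ∑ t ∈ T with Q t = t, sharedEdge Q t x
          + 3 * c * ∑ t ∈ T with Q t ≠ t ∧ col t = m, sharedEdge Q t x))) / 3 := by
        refine (piExpect_mono hw0 hpoint).trans_eq ?_
        simp_rw [div_eq_inv_mul]
        rw [piExpect_const_mul, piExpect_sum]
    _ ≤ _ := by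
        rw [div_le_iff₀ (by norm_num)]
        simpa [mul_comm] using sum_le_sum fun m (_ : m ∈ univ) =>
          piExpect_exp_sum_sharedEdge_colorClass_le hw0 hw h11 hfst hsnd hQ hc hcol m

end MomentBound

/-- Unordered pairs of distinct vertices, stored in increasing order: the index set of the
independent edge variables `(A_{ij}, B'_{ij})`, `i < j`. -/
abbrev SortedPair (n : ℕ) := {p : Fin n × Fin n // p.1 < p.2}

namespace SortedPair

variable {n : ℕ}

def mk' (i j : Fin n) (h : i ≠ j) : SortedPair n :=
  if hij : i < j then ⟨(i, j), hij⟩ else ⟨(j, i), lt_of_le_of_ne (not_lt.mp hij) h.symm⟩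

lemma val_mk' {i j : Fin n} (h : i ≠ j) :
    (mk' i j h).1 = if i < j then (i, j) else (j, i) := by
  unfold mk'
  split_ifs <;> rfl

lemma mk'_comm {i j : Fin n} (h : i ≠ j) : mk' i j h = mk' j i h.symm := by
  ext <;> simp only [val_mk'] <;> split_ifs <;> simp <;> omega

lemma mk'_self (t : SortedPair n) : mk' t.1.1 t.1.2 t.2.ne = t := by
  ext <;> simp [val_mk', t.2]

def map (τ : Equiv.Perm (Fin n)) (t : SortedPair n) : SortedPair n :=
  mk' (τ t.1.1) (τ t.1.2) (τ.injective.ne t.2.ne)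

lemma map_mk' (τ : Equiv.Perm (Fin n)) {i j : Fin n} (h : i ≠ j) :
    map τ (mk' i j h) = mk' (τ i) (τ j) (τ.injective.ne h) := by
  apply Subtype.ext
  simp only [map, val_mk']
  have hτ := τ.injective.ne h
  split_ifs <;> simp only [Prod.mk.injEq] at * <;> omega

lemma map_injective (τ : Equiv.Perm (Fin n)) : Function.Injective (map τ) := by
  intro t t' h
  have h' := congrArg Subtype.val h
  simp only [map, val_mk'] at h'
  have := t.2
  have := t'.2
  split_ifs at h' <;> simp only [Prod.mk.injEq] at h' <;> obtain ⟨h₁, h₂⟩ := h' <;>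
    simp only [τ.injective.eq_iff] at h₁ h₂ <;> ext <;> omega

lemma map_eq_self {τ : Equiv.Perm (Fin n)} {t : SortedPair n} (h : map τ t = t) :
    (τ t.1.1 = t.1.1 ∧ τ t.1.2 = t.1.2) ∨ (τ t.1.1 = t.1.2 ∧ τ t.1.2 = t.1.1) := by
  have h' := congrArg Subtype.val h
  simp only [map, val_mk'] at h'
  split_ifs at h' <;> simp only [Prod.ext_iff] at h' <;> tauto

end SortedPair

section CSBM

open SortedPair

variable {n : ℕ}

abbrev EdgePair (n : ℕ) := (Fin n → Fin n → Bool) × (Fin n → Fin n → Bool)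

abbrev IsAdjPair (e : EdgePair n) : Prop :=
  (∀ i j, e.1 i j = e.1 j i ∧ e.2 i j = e.2 j i) ∧ ∀ i, e.1 i i = false ∧ e.2 i i = false

def adjOf (x : SortedPair n → Bool) (i j : Fin n) : Bool :=
  if h : i = j then false else x (mk' i j h)

def edgesOf (x : SortedPair n → Bool × Bool) : EdgePair n :=
  (adjOf fun t => (x t).1, adjOf fun t => (x t).2)

lemma adjOf_sortedPair (x : SortedPair n → Bool) (t : SortedPair n) :
    adjOf x t.1.1 t.1.2 = x t := by
  rw [adjOf, dif_neg t.2.ne, mk'_self]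

lemma adjOf_restrict {e : Fin n → Fin n → Bool} (hsymm : ∀ i j, e i j = e j i)
    (hdiag : ∀ i, e i i = false) : adjOf (fun t => e t.1.1 t.1.2) = e := by
  ext i j
  by_cases h : i = j
  · simp [adjOf, h, hdiag]
  · simp only [adjOf, dif_neg h, val_mk']
    split_ifs <;> simp [hsymm j i]

lemma isAdjPair_edgesOf (x : SortedPair n → Bool × Bool) : IsAdjPair (edgesOf x) := by
  refine ⟨fun i j => ?_, fun i => by simp [edgesOf, adjOf]⟩
  by_cases h : i = j
  · simp [h]
  · simp [edgesOf, adjOf, h, Ne.symm h, mk'_comm h]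

lemma edgesOf_restrict {e : EdgePair n} (he : IsAdjPair e) :
    edgesOf (fun t => (e.1 t.1.1 t.1.2, e.2 t.1.1 t.1.2)) = e := by
  rw [edgesOf, adjOf_restrict (fun i j => (he.1 i j).1) (fun i => (he.2 i).1),
    adjOf_restrict (fun i j => (he.1 i j).2) (fun i => (he.2 i).2)]

lemma sum_isAdjPair {β : Type*} [AddCommMonoid β] (Φ : EdgePair n → β) :
    ∑ e with IsAdjPair e, Φ e = ∑ x : SortedPair n → Bool × Bool, Φ (edgesOf x) := by
  refine sum_nbij' (fun e t => (e.1 t.1.1 t.1.2, e.2 t.1.1 t.1.2)) edgesOf (by simp)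
    (fun x _ => by simpa using isAdjPair_edgesOf x) (fun e he => ?_)
    (fun x _ => by ext t <;> simp [edgesOf, adjOf_sortedPair]) (fun e he => ?_)
  all_goals rw [edgesOf_restrict (by simpa using he)]

lemma prod_upper_eq_prod_sortedPair {β : Type*} [CommMonoid β] (f : Fin n → Fin n → β) :
    (∏ i, ∏ j, if i < j then f i j else 1) = ∏ t : SortedPair n, f t.1.1 t.1.2 := by
  rw [← Fintype.prod_prod_type' (fun i j => if i < j then f i j else 1), ← prod_filter]
  exact prod_subtype _ (fun p => by simp) _

def incidentPairs (D M : Finset (Fin n)) : Finset (SortedPair n) :=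
  {t | t.1.1 ∈ M ∧ t.1.2 ∈ M ∧ (t.1.1 ∈ D ∨ t.1.2 ∈ D)}

/-- `f(μ)` of the paper, for the error set `D ⊆ M` and `ρ = π*⁻¹ ∘ μ`. -/
def errorDegreeSum (D M : Finset (Fin n)) (ρ : Fin n → Fin n) (e : EdgePair n) : ℕ :=
  ∑ i ∈ D, #{j ∈ M | j ≠ i ∧ e.1 i j = true ∧ e.2 (ρ i) (ρ j) = true}

variable {D M : Finset (Fin n)} {τ : Equiv.Perm (Fin n)}

/-- `(i, j) ↦ {i, j}` is at most two-to-one. -/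
lemma errorDegreeSum_adjOf_le (hDM : D ⊆ M) {ρ : Fin n → Fin n} (hρ : ∀ i ∈ M, ρ i = τ i)
    (x₁ x₂ : SortedPair n → Bool) :
    errorDegreeSum D M ρ (adjOf x₁, adjOf x₂)
      ≤ 2 * #{t ∈ incidentPairs D M | x₁ t && x₂ (map τ t)} := by
  set S := {t ∈ incidentPairs D M | x₁ t && x₂ (map τ t)}
  set P := {ij ∈ D ×ˢ M | ij.2 ≠ ij.1 ∧ adjOf x₁ ij.1 ij.2 = true
    ∧ adjOf x₂ (ρ ij.1) (ρ ij.2) = true}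
  have hP : P ⊆ (S ×ˢ univ).image fun tb : SortedPair n × Bool =>
      if tb.2 then tb.1.1 else tb.1.1.swap := by
    rintro ⟨i, j⟩ hij
    simp only [P, mem_filter, mem_product] at hij
    obtain ⟨⟨hi, hj⟩, hne, h₁, h₂⟩ := hij
    have hne' : i ≠ j := Ne.symm hne
    refine mem_image.mpr ⟨(mk' i j hne', decide (i < j)), mem_product.mpr ⟨?_, mem_univ _⟩, ?_⟩
    · rw [adjOf, dif_neg hne'] at h₁
      rw [hρ i (hDM hi), hρ j hj, adjOf, dif_neg (τ.injective.ne hne'), ← map_mk' τ hne'] at h₂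
      simp only [S, incidentPairs, mem_filter, mem_univ, true_and, h₁, h₂, Bool.and_self,
        and_true, val_mk']
      split_ifs <;> simp [hi, hj, hDM hi]
    · by_cases h : i < j <;> simp [val_mk', h]
  calc errorDegreeSum D M ρ (adjOf x₁, adjOf x₂) = #P := by
        simp only [errorDegreeSum, P, card_filter, sum_product]
    _ ≤ #(S ×ˢ (univ : Finset Bool)) := (card_le_card hP).trans card_image_le
    _ = 2 * #S := by simp [mul_comm]

/-- A pair fixed by `τ` is a transposition of two errors, and distinct such pairs are disjoint. -/
lemma two_mul_card_fixed_incidentPairs_le (hD : ∀ i ∈ M, i ∈ D ↔ τ i ≠ i) :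
    2 * #{t ∈ incidentPairs D M | map τ t = t} ≤ #D := by
  set F := {t ∈ incidentPairs D M | map τ t = t}
  have hswap : ∀ t ∈ F, t.1.1 ∈ M ∧ t.1.2 ∈ M ∧ τ t.1.1 = t.1.2 ∧ τ t.1.2 = t.1.1 := by
    intro t ht
    simp only [F, incidentPairs, mem_filter, mem_univ, true_and] at ht
    obtain ⟨⟨h₁, h₂, hD₁₂⟩, hfix⟩ := ht
    refine ⟨h₁, h₂, (map_eq_self hfix).resolve_left fun ⟨e₁, e₂⟩ => ?_⟩
    rcases hD₁₂ with h | h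
    · exact (hD _ h₁).mp h e₁
    · exact (hD _ h₂).mp h e₂
  calc 2 * #F = #(F ×ˢ (univ : Finset Bool)) := by simp [mul_comm]
    _ ≤ #D := by
      refine card_le_card_of_injOn (fun tb => if tb.2 then tb.1.1.1 else tb.1.1.2) ?_ ?_
      · rintro ⟨t, b⟩ ht
        obtain ⟨h₁, h₂, e₁, e₂⟩ := hswap t (mem_product.mp ht).1
        have := t.2
        cases b
        · exact (hD _ h₂).mpr (by rw [e₂]; omega)
        · exact (hD _ h₁).mpr (by rw [e₁]; omega)
      · rintro ⟨t, b⟩ ht ⟨t', b'⟩ ht' h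
        obtain ⟨-, -, e₁, e₂⟩ := hswap t (mem_product.mp ht).1
        obtain ⟨-, -, e₁', e₂'⟩ := hswap t' (mem_product.mp ht').1
        have := t.2
        have := t'.2
        cases b <;> cases b' <;> simp only [Bool.false_eq_true, ↓reduceIte] at h <;>
          have hτ := congrArg τ h <;> simp only [e₁, e₂, e₁', e₂'] at hτ <;>
          simp only [Subtype.ext_iff, Prod.ext_iff, Bool.false_eq_true, Bool.true_eq_false,
            and_true, and_false] <;> omega

lemma card_incidentPairs_le : #(incidentPairs D M) ≤ #D * n := by
  calc #(incidentPairs D M) ≤ #(D ×ˢ (univ : Finset (Fin n))) := by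
        refine card_le_card_of_injOn (fun t => if t.1.1 ∈ D then t.1 else t.1.swap) ?_ ?_
        · intro t ht
          simp only [incidentPairs, mem_coe, mem_filter, mem_univ, true_and] at ht
          by_cases h : t.1.1 ∈ D <;> simp [h]
          tauto
        · intro t _ t' _ h
          have := t.2
          have := t'.2
          simp only at h
          split_ifs at h <;> simp only [Prod.ext_iff, Prod.fst_swap, Prod.snd_swap] at h <;>
            ext <;> omega
    _ = #D * n := by simp

section PairP

variable {p q s : ℝ}

lemma pairP_nonneg (hp0 : 0 ≤ p) (hp1 : p ≤ 1) (hq0 : 0 ≤ q) (hq1 : q ≤ 1) (hs0 : 0 ≤ s)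
    (hs1 : s ≤ 1) (same x y : Bool) : 0 ≤ pairP p q s same x y := by
  have hr : 0 ≤ (if same then p else q) ∧ (if same then p else q) ≤ 1 := by
    cases same <;> simp [*]
  have hs : 0 ≤ 2 * s - s ^ 2 ∧ 2 * s - s ^ 2 ≤ 1 :=
    ⟨by nlinarith, by nlinarith [sq_nonneg (1 - s)]⟩
  unfold pairP
  generalize (if same then p else q) = r at hr ⊢
  split_ifs
  · exact mul_nonneg (sq_nonneg s) hr.1
  · exact mul_nonneg (mul_nonneg hs0 (by linarith)) hr.1
  · nlinarith [mul_le_mul hs.2 hr.2 hr.1 zero_le_one]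

lemma sum_pairP (same : Bool) : ∑ b : Bool × Bool, pairP p q s same b.1 b.2 = 1 := by
  simp only [Fintype.sum_prod_type, Fintype.sum_bool, pairP, Bool.and_true, Bool.and_false,
    Bool.or_true, Bool.or_false, ↓reduceIte, Bool.false_eq_true]
  ring

lemma pairP_true_true_le (same : Bool) : pairP p q s same true true ≤ s ^ 2 * max p q := by
  unfold pairP
  cases same <;> simp only [Bool.and_self, ↓reduceIte, Bool.false_eq_true] <;> gcongr <;> simp

lemma pairP_true_true_add_true_false (hs0 : 0 ≤ s) (same : Bool) :
    pairP p q s same true true + pairP p q s same true false ≤ s * max p q := by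
  unfold pairP
  cases same <;> simp only [Bool.and_self, Bool.and_false, Bool.or_false, ↓reduceIte,
    Bool.false_eq_true] <;> ring_nf <;> gcongr <;> simp

lemma pairP_false_true (same : Bool) :
    pairP p q s same false true = pairP p q s same true false := by
  simp [pairP]

end PairP

def csbmPairWeight (p q s : ℝ) (ℓ : Fin n → Bool) (t : SortedPair n) (b : Bool × Bool) : ℝ :=
  pairP p q s (ℓ t.1.1 == ℓ t.1.2) b.1 b.2

noncomputable def csbmWeight (p q s : ℝ) (ℓ : Fin n → Bool) (e : EdgePair n) : ℝ :=
  (1 / 2 : ℝ) ^ n * ∏ i : Fin n, ∏ j : Fin n,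
    (if i < j then pairP p q s (ℓ i == ℓ j) (e.1 i j) (e.2 i j) else 1)

lemma csbmWeight_edgesOf (p q s : ℝ) (ℓ : Fin n → Bool) (x : SortedPair n → Bool × Bool) :
    csbmWeight p q s ℓ (edgesOf x) = (1 / 2 : ℝ) ^ n * ∏ t, csbmPairWeight p q s ℓ t (x t) := by
  rw [csbmWeight, prod_upper_eq_prod_sortedPair]
  simp [edgesOf, csbmPairWeight, adjOf_sortedPair]

section Law

variable {Ω : Type} [MeasurableSpace Ω] {ℙ : Measure Ω} [IsProbabilityMeasure ℙ]
  {p q s : ℝ} {σ : Ω → Fin n → Bool} {A B' : Ω → Fin n → Fin n → Bool}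

lemma toReal_measure_le_sum_csbmWeight
    (hmeas : ∀ (ℓ : Fin n → Bool) (e₁ e₂ : Fin n → Fin n → Bool),
      MeasurableSet {ω | σ ω = ℓ ∧ A ω = e₁ ∧ B' ω = e₂})
    (hlaw : csbmLaw ℙ n p q s σ A B') (P : EdgePair n → Prop) [DecidablePred P] :
    (ℙ {ω | P (A ω, B' ω)}).toReal ≤ ∑ ℓ, ∑ e with IsAdjPair e ∧ P e, csbmWeight p q s ℓ e := by
  let atom : (Fin n → Bool) × EdgePair n → Set Ω :=
    fun c => {ω | σ ω = c.1 ∧ A ω = c.2.1 ∧ B' ω = c.2.2}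
  have hgood : {ω | IsAdjPair (A ω, B' ω)} = ⋃ c ∈ univ.filter (IsAdjPair ·.2), atom c := by
    ext ω
    simp only [Set.mem_ofPred_eq, Set.mem_iUnion, mem_filter, mem_univ, true_and, atom]
    exact ⟨fun h => ⟨(σ ω, A ω, B' ω), h, rfl, rfl, rfl⟩,
      fun ⟨c, hc, h₁, h₂, h₃⟩ => h₂ ▸ h₃ ▸ hc⟩
  have hbad : ℙ {ω | IsAdjPair (A ω, B' ω)}ᶜ = 0 := by
    refine (prob_compl_eq_zero_iff ?_).mpr hlaw.1
    rw [hgood]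
    exact Finset.measurableSet_biUnion _ fun c _ => hmeas c.1 c.2.1 c.2.2
  set C := univ.filter fun c : (Fin n → Bool) × EdgePair n => IsAdjPair c.2 ∧ P c.2
  have hcover : {ω | P (A ω, B' ω)} ⊆ (⋃ c ∈ C, atom c) ∪ {ω | IsAdjPair (A ω, B' ω)}ᶜ := by
    intro ω hω
    by_cases h : IsAdjPair (A ω, B' ω)
    · exact Or.inl (Set.mem_biUnion (x := (σ ω, A ω, B' ω))
        (mem_filter.mpr ⟨mem_univ _, h, hω⟩) ⟨rfl, rfl, rfl⟩)
    · exact Or.inr h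
  have hle : ℙ {ω | P (A ω, B' ω)} ≤ ∑ c ∈ C, ℙ (atom c) :=
    calc ℙ {ω | P (A ω, B' ω)} ≤ ℙ (⋃ c ∈ C, atom c) + 0 :=
          (measure_mono hcover).trans (hbad ▸ measure_union_le _ _)
      _ ≤ ∑ c ∈ C, ℙ (atom c) := by rw [add_zero]; exact measure_biUnion_finset_le C atom
  calc (ℙ {ω | P (A ω, B' ω)}).toReal
      ≤ ∑ c ∈ C, (ℙ (atom c)).toReal := by
        rw [← ENNReal.toReal_sum fun c _ => measure_ne_top ℙ _]
        exact ENNReal.toReal_mono (ENNReal.sum_ne_top.mpr fun c _ => measure_ne_top ℙ _) hle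
    _ = ∑ c ∈ C, csbmWeight p q s c.1 c.2 := sum_congr rfl fun c hc => by
        obtain ⟨⟨hsymm, hdiag⟩, -⟩ := (mem_filter.mp hc).2
        exact hlaw.2 c.1 c.2.1 c.2.2 hsymm hdiag
    _ = ∑ ℓ, ∑ e with IsAdjPair e ∧ P e, csbmWeight p q s ℓ e := by
        rw [show C = univ ×ˢ univ.filter (fun e => IsAdjPair e ∧ P e) by ext; simp [C],
          sum_product]

theorem toReal_measure_le_exp_mul_of_piExpect_le (hp0 : 0 ≤ p) (hp1 : p ≤ 1) (hq0 : 0 ≤ q)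
    (hq1 : q ≤ 1) (hs0 : 0 ≤ s) (hs1 : s ≤ 1)
    (hmeas : ∀ (ℓ : Fin n → Bool) (e₁ e₂ : Fin n → Fin n → Bool),
      MeasurableSet {ω | σ ω = ℓ ∧ A ω = e₁ ∧ B' ω = e₂})
    (hlaw : csbmLaw ℙ n p q s σ A B') (G : EdgePair n → ℝ) (a θ K : ℝ) (hθ : 0 ≤ θ)
    (hK : ∀ ℓ, piExpect (csbmPairWeight p q s ℓ) (fun x => Real.exp (θ * G (edgesOf x))) ≤ K) :
    (ℙ {ω | a ≤ G (A ω, B' ω)}).toReal ≤ Real.exp (-θ * a) * K := by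
  have hW : ∀ (ℓ : Fin n → Bool) e, 0 ≤ csbmWeight p q s ℓ e := fun ℓ e =>
    mul_nonneg (by positivity) (prod_nonneg fun i _ => prod_nonneg fun j _ => by
      split_ifs
      exacts [pairP_nonneg hp0 hp1 hq0 hq1 hs0 hs1 _ _ _, zero_le_one])
  calc (ℙ {ω | a ≤ G (A ω, B' ω)}).toReal
      ≤ ∑ ℓ, ∑ e with IsAdjPair e ∧ a ≤ G e, csbmWeight p q s ℓ e :=
        toReal_measure_le_sum_csbmWeight hmeas hlaw (fun e => a ≤ G e)
    _ ≤ ∑ ℓ, ∑ e with IsAdjPair e, csbmWeight p q s ℓ e * Real.exp (θ * (G e - a)) := by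
        gcongr with ℓ
        rw [← filter_filter, sum_filter]
        gcongr with e
        split_ifs with h
        · exact le_mul_of_one_le_right (hW ℓ e) (Real.one_le_exp (mul_nonneg hθ (by linarith)))
        · exact mul_nonneg (hW ℓ e) (Real.exp_pos _).le
    _ = ∑ ℓ : Fin n → Bool, (1 / 2 : ℝ) ^ n * Real.exp (-θ * a)
          * piExpect (csbmPairWeight p q s ℓ) (fun x => Real.exp (θ * G (edgesOf x))) := by
        refine sum_congr rfl fun ℓ _ => ?_
        rw [sum_isAdjPair, piExpect, mul_sum]
        refine sum_congr rfl fun x _ => ?_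
        rw [csbmWeight_edgesOf, mul_sub, Real.exp_sub, neg_mul, Real.exp_neg]
        ring
    _ ≤ ∑ ℓ : Fin n → Bool, (1 / 2 : ℝ) ^ n * Real.exp (-θ * a) * K := by
        gcongr with ℓ
        exact hK ℓ
    _ = Real.exp (-θ * a) * K := by
        rw [sum_const, card_univ, Fintype.card_fun, Fintype.card_bool, Fintype.card_fin,
          nsmul_eq_mul]
        push_cast
        rw [← mul_assoc, ← mul_assoc, ← mul_pow]
        norm_num

end Law

theorem piExpect_exp_errorDegreeSum_le {D M : Finset (Fin n)} {τ : Equiv.Perm (Fin n)}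
    (hDM : D ⊆ M) (hD : ∀ i ∈ M, i ∈ D ↔ τ i ≠ i) {ρ : Fin n → Fin n}
    (hρ : ∀ i ∈ M, ρ i = τ i) {w : SortedPair n → Bool × Bool → ℝ}
    (hw0 : ∀ i a, 0 ≤ w i a) (hw : ∀ i, ∑ a, w i a = 1) {γ₁ γ₂ : ℝ} (hγ₁ : 0 ≤ γ₁)
    (h11 : ∀ i, w i (true, true) ≤ γ₁)
    (hfst : ∀ i, w i (true, true) + w i (true, false) ≤ γ₂)
    (hsnd : ∀ i, w i (true, true) + w i (false, true) ≤ γ₂) {θ : ℝ} (hθ : 0 ≤ θ) :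
    piExpect w (fun x => Real.exp (θ * errorDegreeSum D M ρ (edgesOf x)))
      ≤ Real.exp (#D * ((1 / 2) * γ₁ * (Real.exp (2 * θ) - 1)
          + n * γ₂ ^ 2 * (Real.exp (6 * θ) - 1))) := by
  set T := incidentPairs D M
  have hcount : ∀ x, (errorDegreeSum D M ρ (edgesOf x) : ℝ)
      ≤ 2 * ∑ t ∈ T, sharedEdge (map τ) t x := fun x => by
    simp only [sharedEdge, sum_boole]
    exact_mod_cast errorDegreeSum_adjOf_le hDM hρ _ _
  have hB₁ : 0 ≤ γ₁ * (Real.exp (2 * θ) - 1) :=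
    mul_nonneg hγ₁ (by linarith [Real.one_le_exp (by positivity : 0 ≤ 2 * θ)])
  have hB₂ : 0 ≤ γ₂ ^ 2 * (Real.exp (6 * θ) - 1) :=
    mul_nonneg (sq_nonneg _) (by linarith [Real.one_le_exp (by positivity : 0 ≤ 6 * θ)])
  have hfixed : (2 * #{t ∈ T | map τ t = t} : ℝ) ≤ #D := by
    exact_mod_cast two_mul_card_fixed_incidentPairs_le hD
  have hT : (#T : ℝ) ≤ #D * n := by exact_mod_cast card_incidentPairs_le
  calc piExpect w (fun x => Real.exp (θ * errorDegreeSum D M ρ (edgesOf x)))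
      ≤ piExpect w (fun x => Real.exp (2 * θ * ∑ t ∈ T, sharedEdge (map τ) t x)) :=
        piExpect_mono hw0 fun x => Real.exp_le_exp.mpr <| by
          rw [mul_comm 2 θ, mul_assoc]
          exact mul_le_mul_of_nonneg_left (hcount x) hθ
    _ ≤ Real.exp (#{t ∈ T | map τ t = t} * ((Real.exp (2 * θ) - 1) * γ₁)
          + #T * ((Real.exp (3 * (2 * θ)) - 1) * γ₂ ^ 2)) :=
        piExpect_exp_sum_sharedEdge_le hw0 hw h11 hfst hsnd (map_injective τ).injOn
          (by positivity)
    _ ≤ _ := by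
        rw [show 3 * (2 * θ) = 6 * θ by ring]
        gcongr Real.exp ?_
        nlinarith [mul_le_mul_of_nonneg_right hfixed hB₁, mul_le_mul_of_nonneg_right hT hB₂]

theorem piExpect_csbmPairWeight_exp_errorDegreeSum_le {p q s : ℝ} (hp0 : 0 ≤ p) (hp1 : p ≤ 1)
    (hq0 : 0 ≤ q) (hq1 : q ≤ 1) (hs0 : 0 ≤ s) (hs1 : s ≤ 1) {D M : Finset (Fin n)}
    {τ : Equiv.Perm (Fin n)} (hDM : D ⊆ M) (hD : ∀ i ∈ M, i ∈ D ↔ τ i ≠ i)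
    {ρ : Fin n → Fin n} (hρ : ∀ i ∈ M, ρ i = τ i) (ℓ : Fin n → Bool) {θ : ℝ} (hθ : 0 ≤ θ) :
    piExpect (csbmPairWeight p q s ℓ) (fun x => Real.exp (θ * errorDegreeSum D M ρ (edgesOf x)))
      ≤ Real.exp (#D * ((1 / 2) * (s ^ 2 * max p q) * (Real.exp (2 * θ) - 1)
          + n * (s * max p q) ^ 2 * (Real.exp (6 * θ) - 1))) := by
  let w := csbmPairWeight p q s ℓ
  have hw0 : ∀ t b, 0 ≤ w t b := fun t b => pairP_nonneg hp0 hp1 hq0 hq1 hs0 hs1 _ _ _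
  have hw : ∀ t, ∑ b, w t b = 1 := fun t => sum_pairP _
  have h11 : ∀ t, w t (true, true) ≤ s ^ 2 * max p q := fun t => pairP_true_true_le _
  have hfst : ∀ t, w t (true, true) + w t (true, false) ≤ s * max p q := fun t =>
    pairP_true_true_add_true_false hs0 _
  have hsnd : ∀ t, w t (true, true) + w t (false, true) ≤ s * max p q := fun t => by
    simpa only [w, csbmPairWeight, pairP_false_true] using hfst t
  exact piExpect_exp_errorDegreeSum_le hDM hD hρ hw0 hw
    (mul_nonneg (sq_nonneg s) (le_max_of_le_left hp0)) h11 hfst hsnd hθ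

end CSBM

lemma exists_perm_eqOn {α : Type*} [Fintype α] [DecidableEq α] {s : Finset α} {f : α → α}
    (hf : Set.InjOn f s) : ∃ τ : Equiv.Perm α, ∀ i ∈ s, τ i = f i := by
  obtain ⟨g, hg⟩ := Finset.exists_equiv_extend_of_card_eq (t := univ) (by simp) (by simp) hf
  exact ⟨g.trans (Equiv.subtypeUnivEquiv mem_univ), hg⟩

theorem statement10_general {Ω : Type} [MeasurableSpace Ω] (ℙ : Measure Ω)
    [IsProbabilityMeasure ℙ] (n : ℕ) (p q s : ℝ)
    (hp0 : 0 ≤ p) (hp1 : p ≤ 1) (hq0 : 0 ≤ q) (hq1 : q ≤ 1) (hs0 : 0 ≤ s) (hs1 : s ≤ 1)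
    (σ : Ω → Fin n → Bool) (A B' : Ω → Fin n → Fin n → Bool)
    (hmeas : ∀ (ℓ : Fin n → Bool) (e1 e2 : Fin n → Fin n → Bool),
      MeasurableSet {ω | σ ω = ℓ ∧ A ω = e1 ∧ B' ω = e2})
    (hlaw : csbmLaw ℙ n p q s σ A B')
    (πs : Equiv.Perm (Fin n)) (d k : ℕ)
    (M : Finset (Fin n)) (μ : Fin n → Fin n) (hinj : Set.InjOn μ ↑M)
    (herr : (M.filter (fun i => μ i ≠ πs i)).card = d)
    (θ : ℝ) (hθ : 0 < θ) :
    (ℙ {ω | k * d ≤ ∑ i ∈ M.filter (fun i => μ i ≠ πs i),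
        (M.filter (fun j => j ≠ i ∧ A ω i j = true ∧
          B' ω (πs.symm (μ i)) (πs.symm (μ j)) = true)).card}).toReal
      ≤ 3 * Real.exp ((d : ℝ) * (-θ * k
          + (1 / 2) * s ^ 2 * max p q * (Real.exp (2 * θ) - 1)
          + n * (s * max p q) ^ 2 * (Real.exp (6 * θ) - 1))) := by
  set D := M.filter (fun i => μ i ≠ πs i)
  set ρ : Fin n → Fin n := fun i => πs.symm (μ i)
  obtain ⟨τ, hτ⟩ := exists_perm_eqOn (f := ρ) (s := M)
    fun i hi j hj h => hinj hi hj (πs.symm.injective h)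
  have hD : ∀ i ∈ M, i ∈ D ↔ τ i ≠ i := fun i hi => by
    simp [D, ρ, hi, hτ i hi, Equiv.symm_apply_eq]
  calc _ = (ℙ {ω | ((k * d : ℕ) : ℝ) ≤ errorDegreeSum D M ρ (A ω, B' ω)}).toReal := by
        simp only [Nat.cast_le]
        rfl
    _ ≤ Real.exp (-θ * (k * d : ℕ)) * Real.exp (d * ((1 / 2) * (s ^ 2 * max p q)
          * (Real.exp (2 * θ) - 1) + n * (s * max p q) ^ 2 * (Real.exp (6 * θ) - 1))) :=
        toReal_measure_le_exp_mul_of_piExpect_le hp0 hp1 hq0 hq1 hs0 hs1 hmeas hlaw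
          (fun e => errorDegreeSum D M ρ e) _ θ _ hθ.le fun ℓ => herr ▸
            piExpect_csbmPairWeight_exp_errorDegreeSum_le hp0 hp1 hq0 hq1 hs0 hs1
              (filter_subset _ _) hD (fun i hi => (hτ i hi).symm) ℓ hθ.le
    _ ≤ _ := by
        rw [← Real.exp_add]
        refine le_mul_of_one_le_left (Real.exp_pos _).le (by norm_num) |>.trans_eq' ?_
        congr 1
        push_cast
        ring

/-- in `CSBM(n, p, q, s)` with ground truth permutation `π` (so that the
adjacency of `G₂` is `B_{xy} = B'_{π⁻¹(x)π⁻¹(y)}`), for `d, k ∈ [n]`, any `π`-maximal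
matching `(M, μ)` with exactly `d` errors, and any `θ > 0`,
`P(f(μ) ≥ kd) ≤ 3 exp[d(−θk + ½s²γ(e^{2θ}−1) + n(sγ)²(e^{6θ}−1))]`, `γ = max{p,q}`. -/
theorem statement10 {Ω : Type} [MeasurableSpace Ω] (ℙ : Measure Ω)
    [IsProbabilityMeasure ℙ] (n : ℕ) (p q s : ℝ)
    (hp0 : 0 ≤ p) (hp1 : p ≤ 1) (hq0 : 0 ≤ q) (hq1 : q ≤ 1) (hs0 : 0 ≤ s) (hs1 : s ≤ 1)
    (σ : Ω → Fin n → Bool) (A B' : Ω → Fin n → Fin n → Bool)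
    (hmeas : ∀ (ℓ : Fin n → Bool) (e1 e2 : Fin n → Fin n → Bool),
      MeasurableSet {ω | σ ω = ℓ ∧ A ω = e1 ∧ B' ω = e2})
    (hlaw : csbmLaw ℙ n p q s σ A B')
    (πs : Equiv.Perm (Fin n)) (d k : ℕ)
    (hd1 : 1 ≤ d) (hdn : d ≤ n) (hk1 : 1 ≤ k) (hkn : k ≤ n)
    (M : Finset (Fin n)) (μ : Fin n → Fin n) (hinj : Set.InjOn μ ↑M)
    (hmax : ∀ i : Fin n, i ∈ M ∨ πs i ∈ M.image μ)
    (herr : (M.filter (fun i => μ i ≠ πs i)).card = d)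
    (θ : ℝ) (hθ : 0 < θ) :
    (ℙ {ω | k * d ≤ ∑ i ∈ M.filter (fun i => μ i ≠ πs i),
        (M.filter (fun j => j ≠ i ∧ A ω i j = true ∧
          B' ω (πs.symm (μ i)) (πs.symm (μ j)) = true)).card}).toReal
      ≤ 3 * Real.exp ((d : ℝ) * (-θ * k
          + (1 / 2) * s ^ 2 * max p q * (Real.exp (2 * θ) - 1)
          + n * (s * max p q) ^ 2 * (Real.exp (6 * θ) - 1))) :=
  statement10_general ℙ n p q s hp0 hp1 hq0 hq1 hs0 hs1 σ A B' hmeas hlaw πs d k M μ hinj herr θ hθ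
end

section
/- For every permutation ρ of the pruned singleton set S*, the permutation P_{π*,ρ} (equal to π* off S* and to π* ∘ ρ on S*) lies in A*; that is, it induces the same pruned singleton set S* and agrees with π* off S*. Consequently, A* = {P_{π*,ρ} : ρ a permutation of S*}. -/
open Finset

/-- `R_π`: the singletons of the intersection graph `G₁ ∧_π G₂`. -/
def Rset (n : ℕ) (a b : Fin n → Fin n → Bool) (π : Equiv.Perm (Fin n)) : Set (Fin n) :=
  {i | ∀ j, ¬(a i j = true ∧ b (π i) (π j) = true)}

/-- `S_π`: the pruned singleton set. -/
def Sset (n : ℕ) (a b : Fin n → Fin n → Bool) (π : Equiv.Perm (Fin n)) : Set (Fin n) :=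
  {i | i ∈ Rset n a b π ∧ (∀ j ∈ Rset n a b π, a i j = false) ∧
       ∀ j, a i j = true → ∀ k ∈ Rset n a b π, b (π j) (π k) = false}

lemma mem_Rset {n : ℕ} {a b : Fin n → Fin n → Bool} {π : Equiv.Perm (Fin n)} {i : Fin n} :
    i ∈ Rset n a b π ↔ ∀ j, a i j = true → b (π i) (π j) = false := by
  simp [Rset, Set.mem_setOf_eq, not_and, Bool.not_eq_true]

lemma Sset_subset_Rset {n : ℕ} {a b : Fin n → Fin n → Bool} {π : Equiv.Perm (Fin n)} :
    Sset n a b π ⊆ Rset n a b π := fun _ hi => hi.1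

lemma key_R {n : ℕ} {a b : Fin n → Fin n → Bool} {πstar ρ : Equiv.Perm (Fin n)}
    (has : ∀ i j, a i j = a j i) (hbs : ∀ i j, b i j = b j i)
    (hρ : ∀ i, i ∉ Sset n a b πstar → ρ i = i) :
    Rset n a b (ρ.trans πstar) = Rset n a b πstar := by
  have hSR : Sset n a b πstar ⊆ Rset n a b πstar := Sset_subset_Rset
  have hρS : ∀ i, i ∈ Sset n a b πstar → ρ i ∈ Sset n a b πstar := by
    intro i hi
    by_contra hc
    have h2 : ρ i = i := ρ.injective (hρ _ hc)
    rw [h2] at hc; exact hc hi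
  ext i
  simp only [mem_Rset, Equiv.trans_apply]
  constructor
  · intro hP j haij
    by_contra hb
    have hbt : b (πstar i) (πstar j) = true := by
      cases h : b (πstar i) (πstar j) with
      | false => exact absurd h hb
      | true => rfl
    have hiR : i ∉ Rset n a b πstar := by
      rw [mem_Rset]
      push_neg
      exact ⟨j, haij, by simp [hbt]⟩
    have hjS : j ∉ Sset n a b πstar := by
      intro hjS
      have hjR := hSR hjS
      have h3 := mem_Rset.mp hjR i (by rw [has]; exact haij)
      rw [hbs] at h3
      rw [h3] at hbt; exact Bool.noConfusion hbt
    have hiS : i ∉ Sset n a b πstar := fun h => hiR (hSR h)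
    have h1 := hP j haij
    rw [hρ i hiS, hρ j hjS] at h1
    rw [h1] at hbt; exact Bool.noConfusion hbt
  · intro hiR
    by_cases hiS : i ∈ Sset n a b πstar
    · intro j haij
      obtain ⟨hc1, hc2, hc3⟩ := hiS
      have hjR : j ∉ Rset n a b πstar := fun hjR => by
        rw [hc2 j hjR] at haij; exact Bool.noConfusion haij
      have hjS : j ∉ Sset n a b πstar := fun h => hjR (hSR h)
      rw [hρ j hjS]
      have hρiR : ρ i ∈ Rset n a b πstar := hSR (hρS i ⟨hc1, hc2, hc3⟩)
      have h4 := hc3 j haij (ρ i) hρiR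
      rw [hbs]; exact h4
    · rw [hρ i hiS]
      intro j haij
      by_cases hjS : j ∈ Sset n a b πstar
      · exfalso
        have h5 := hjS.2.1 i (mem_Rset.mpr hiR)
        rw [has, h5] at haij; exact Bool.noConfusion haij
      · rw [hρ j hjS]; exact hiR j haij

lemma key_S {n : ℕ} {a b : Fin n → Fin n → Bool} {πstar ρ : Equiv.Perm (Fin n)}
    (has : ∀ i j, a i j = a j i) (hbs : ∀ i j, b i j = b j i)
    (hρ : ∀ i, i ∉ Sset n a b πstar → ρ i = i) :
    Sset n a b (ρ.trans πstar) = Sset n a b πstar := by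
  have hSR : Sset n a b πstar ⊆ Rset n a b πstar := Sset_subset_Rset
  have hρS : ∀ i, i ∈ Sset n a b πstar → ρ i ∈ Sset n a b πstar := by
    intro i hi
    by_contra hc
    have h2 : ρ i = i := ρ.injective (hρ _ hc)
    rw [h2] at hc; exact hc hi
  have hρR : ∀ i, i ∈ Rset n a b πstar → ρ i ∈ Rset n a b πstar := by
    intro i hi
    by_cases h : i ∈ Sset n a b πstar
    · exact hSR (hρS i h)
    · rw [hρ i h]; exact hi
  have hρR' : ∀ i, i ∈ Rset n a b πstar → ρ.symm i ∈ Rset n a b πstar := by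
    intro i hi
    by_cases h : i ∈ Sset n a b πstar
    · by_cases h2 : ρ.symm i ∈ Sset n a b πstar
      · exact hSR h2
      · have h3 : ρ (ρ.symm i) = ρ.symm i := hρ _ h2
        rw [Equiv.apply_symm_apply] at h3
        rw [← h3]; exact hi
    · have h3 : ρ.symm i = i := by
        have h4 := hρ i h
        exact (Equiv.symm_apply_eq ρ).mpr h4.symm
      rw [h3]; exact hi
  have hR := key_R has hbs hρ
  ext i
  simp only [Sset, Set.mem_setOf_eq, hR, Equiv.trans_apply]
  constructor
  · rintro ⟨hc1, hc2, hc3⟩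
    refine ⟨hc1, hc2, ?_⟩
    intro j haij k hkR
    have hjR : j ∉ Rset n a b πstar := fun h => by
      rw [hc2 j h] at haij; exact Bool.noConfusion haij
    have hjS : j ∉ Sset n a b πstar := fun h => hjR (hSR h)
    have h6 := hc3 j haij (ρ.symm k) (hρR' k hkR)
    rw [hρ j hjS, Equiv.apply_symm_apply] at h6
    exact h6
  · rintro ⟨hc1, hc2, hc3⟩
    refine ⟨hc1, hc2, ?_⟩
    intro j haij k hkR
    have hjR : j ∉ Rset n a b πstar := fun h => by
      rw [hc2 j h] at haij; exact Bool.noConfusion haij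
    have hjS : j ∉ Sset n a b πstar := fun h => hjR (hSR h)
    rw [hρ j hjS]
    exact hc3 j haij (ρ k) (hρR k hkR)

/-- for every permutation `ρ` supported on `S* := S_{π*}` (i.e. fixing all
points outside `S*`), the permutation `P_{π*,ρ} = π* ∘ ρ` (equal to `π*` off `S*` and
to `π*(ρ(·))` on `S*`) lies in `A*`: it has pruned singleton set `S*` and agrees with
`π*` off `S*`.  Consequently `A* = {P_{π*,ρ} : ρ a permutation of S*}`. -/
theorem statement18 (n : ℕ) (a b : Fin n → Fin n → Bool)
    (has : ∀ i j, a i j = a j i) (hbs : ∀ i j, b i j = b j i)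
    (hai : ∀ i, a i i = false) (hbi : ∀ i, b i i = false)
    (πstar : Equiv.Perm (Fin n)) :
    (∀ ρ : Equiv.Perm (Fin n), (∀ i, i ∉ Sset n a b πstar → ρ i = i) →
      (Sset n a b (ρ.trans πstar) = Sset n a b πstar ∧
       ∀ i, i ∉ Sset n a b πstar → (ρ.trans πstar) i = πstar i)) ∧
    {π : Equiv.Perm (Fin n) | Sset n a b π = Sset n a b πstar ∧
        ∀ i, i ∉ Sset n a b πstar → π i = πstar i}
      = {π | ∃ ρ : Equiv.Perm (Fin n),
          (∀ i, i ∉ Sset n a b πstar → ρ i = i) ∧ π = ρ.trans πstar} := by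
  have hmain : ∀ ρ : Equiv.Perm (Fin n), (∀ i, i ∉ Sset n a b πstar → ρ i = i) →
      (Sset n a b (ρ.trans πstar) = Sset n a b πstar ∧
       ∀ i, i ∉ Sset n a b πstar → (ρ.trans πstar) i = πstar i) := by
    intro ρ hρ
    refine ⟨key_S has hbs hρ, fun i hi => ?_⟩
    simp [Equiv.trans_apply, hρ i hi]
  refine ⟨hmain, ?_⟩
  ext π
  simp only [Set.mem_setOf_eq]
  constructor
  · rintro ⟨hS, hoff⟩
    refine ⟨π.trans πstar.symm, ?_, ?_⟩
    · intro i hi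
      simp [Equiv.trans_apply, hoff i hi]
    · ext x; simp [Equiv.trans_apply]
  · rintro ⟨ρ, hρ, rfl⟩
    exact hmain ρ hρ
end
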